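/- arXiv:1001.2764 — 7 statements merged into one kernel-verified Lean document; each statement's English description precedes it below -/
import Mathlib

section
/- Let A be an associative unital algebra and let u, v be invertible elements of A such that u + u^{-1} and v + v^{-1} are central in A. Then uv + (uv)^{-1} = vu + (vu)^{-1}. -/
theorem stmt_1 {A : Type*} [Ring A] (u v : Aˣ)
    (hu : ∀ a : A, ((u : A) + ((u⁻¹ : Aˣ) : A)) * a = a * ((u : A) + ((u⁻¹ : Aˣ) : A)))
    (hv : ∀ a : A, ((v : A) + ((v⁻¹ : Aˣ) : A)) * a = a * ((v : A) + ((v⁻¹ : Aˣ) : A))) :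
    ((u * v : Aˣ) : A) + (((u * v)⁻¹ : Aˣ) : A)
      = ((v * u : Aˣ) : A) + (((v * u)⁻¹ : Aˣ) : A) := by
  have h1 := hu (v : A)
  have h2 := hv ((u⁻¹ : Aˣ) : A)
  rw [add_mul, mul_add] at h1 h2
  simp only [Units.val_mul, mul_inv_rev]
  linear_combination (norm := abel) h1 + h2
end

section
/- Let A be an associative unital algebra and let u, v be invertible elements of A such that u + u^{-1} and v + v^{-1} are central in A. Then the element uv + (uv)^{-1} commutes with u and with v. -/
theorem stmt_2 {A : Type*} [Ring A] (u v : Aˣ)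
    (hu : ∀ a : A, ((u : A) + ((u⁻¹ : Aˣ) : A)) * a = a * ((u : A) + ((u⁻¹ : Aˣ) : A)))
    (hv : ∀ a : A, ((v : A) + ((v⁻¹ : Aˣ) : A)) * a = a * ((v : A) + ((v⁻¹ : Aˣ) : A))) :
    Commute (((u * v : Aˣ) : A) + (((u * v)⁻¹ : Aˣ) : A)) (u : A) ∧
    Commute (((u * v : Aˣ) : A) + (((u * v)⁻¹ : Aˣ) : A)) (v : A) := by
  set a : A := (u : A) with ha
  set a' : A := ((u⁻¹ : Aˣ) : A) with ha'
  set b : A := (v : A) with hb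
  set b' : A := ((v⁻¹ : Aˣ) : A) with hb'
  have haa' : a * a' = 1 := Units.mul_inv u
  have ha'a : a' * a = 1 := Units.inv_mul u
  have hbb' : b * b' = 1 := Units.mul_inv v
  have hb'b : b' * b = 1 := Units.inv_mul v
  have hcoe : (((u * v)⁻¹ : Aˣ) : A) = b' * a' := by
    rw [mul_inv_rev, Units.val_mul]
  have hcoe2 : ((u * v : Aˣ) : A) = a * b := by rw [Units.val_mul]
  rw [hcoe, hcoe2]
  -- key linear relations
  have hba : b * a = a * b + a * b' - b' * a := by
    have h := hv a
    rw [add_mul, mul_add] at h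
    rw [← h]; abel
  have hb'a' : b' * a' = a * b' + a' * b' - b' * a := by
    have h := hu b'
    rw [add_mul, mul_add] at h
    rw [h]; abel
  constructor
  · show (a * b + b' * a') * a = a * (a * b + b' * a')
    calc (a * b + b' * a') * a
        = a * (b * a) + b' * (a' * a) := by noncomm_ring
      _ = a * (a * b + a * b' - b' * a) + b' * 1 := by rw [hba, ha'a]
      _ = a * (a * b' + a' * b' - b' * a) + a * (a * b) - (a * a') * b' + b' := by
          noncomm_ring
      _ = a * (b' * a') + a * (a * b) - 1 * b' + b' := by rw [hb'a', haa']
      _ = a * (a * b + b' * a') := by noncomm_ring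
  · show (a * b + b' * a') * b = b * (a * b + b' * a')
    have key : b' * (a' * b) = a + a' - b' * (a * b) := by
      have h := hu b
      rw [add_mul, mul_add] at h
      -- h : a * b + a' * b = b * a + b * a'
      have h3 : b' * (a * b + a' * b) = b' * (b * (a + a')) := by rw [h]; noncomm_ring
      rw [mul_add] at h3
      have h2 : b' * (b * (a + a')) = a + a' := by rw [← mul_assoc, hb'b, one_mul]
      rw [h2] at h3
      rw [← h3]; abel
    have e1 : (a * b + a * b' - b' * a) * b = a * b * b + a - b' * (a * b) := by
      rw [sub_mul, add_mul, mul_assoc a b' b, hb'b, mul_one, mul_assoc b' a b]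
    calc (a * b + b' * a') * b
        = a * b * b + b' * (a' * b) := by noncomm_ring
      _ = a * b * b + (a + a' - b' * (a * b)) := by rw [key]
      _ = (a * b + a * b' - b' * a) * b + a' := by rw [e1]; abel
      _ = b * a * b + a' := by rw [← hba]
      _ = b * (a * b + b' * a') := by
          have h4 : b * (b' * a') = a' := by rw [← mul_assoc, hbb', one_mul]
          rw [mul_add, h4, mul_assoc]
end

section
/- Let Ĥ be the universal double affine Hecke algebra of type (C₁^∨, C₁). There exists an algebra automorphism B of Ĥ sending t₀^∨ ↦ t₁^{-1} t₁^∨ t₁, t₀ ↦ t₀^∨, t₁^∨ ↦ t₀, t₁ ↦ t₁, and B³ equals the inner automorphism h ↦ t₁^{-1} h t₁. -/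
/-- Defining relations of the universal DAHA of type (C₁∨,C₁).
Generator indices: 0 = t₀∨, 1 = t₀, 2 = t₁∨, 3 = t₁; index i+4 is the inverse of index i. -/
inductive URel (F : Type) [Field F] :
    FreeAlgebra F (Fin 8) → FreeAlgebra F (Fin 8) → Prop
  | invLeft (i : Fin 4) :
      URel F (FreeAlgebra.ι F (i.castAdd 4) * FreeAlgebra.ι F (i.addNat 4)) 1
  | invRight (i : Fin 4) :
      URel F (FreeAlgebra.ι F (i.addNat 4) * FreeAlgebra.ι F (i.castAdd 4)) 1
  | central (i : Fin 4) (a : FreeAlgebra F (Fin 8)) :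
      URel F ((FreeAlgebra.ι F (i.castAdd 4) + FreeAlgebra.ι F (i.addNat 4)) * a)
             (a * (FreeAlgebra.ι F (i.castAdd 4) + FreeAlgebra.ι F (i.addNat 4)))
  | prodCentral (a : FreeAlgebra F (Fin 8)) :
      URel F ((FreeAlgebra.ι F 0 * FreeAlgebra.ι F 1 * FreeAlgebra.ι F 2 * FreeAlgebra.ι F 3) * a)
             (a * (FreeAlgebra.ι F 0 * FreeAlgebra.ι F 1 * FreeAlgebra.ι F 2 * FreeAlgebra.ι F 3))

/-- The universal double affine Hecke algebra of type (C₁∨,C₁). -/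
abbrev UDAHA (F : Type) [Field F] := RingQuot (URel F)

/-- The images of the generators in the UDAHA. -/
noncomputable def T (F : Type) [Field F] (i : Fin 8) : UDAHA F :=
  RingQuot.mkAlgHom F (URel F) (FreeAlgebra.ι F i)

variable (F : Type) [Field F]

lemma TmulL (i : Fin 4) : T F (i.castAdd 4) * T F (i.addNat 4) = 1 := by
  have h := RingQuot.mkAlgHom_rel F (URel.invLeft (F := F) i)
  simpa [T] using h

lemma TmulR (i : Fin 4) : T F (i.addNat 4) * T F (i.castAdd 4) = 1 := by
  have h := RingQuot.mkAlgHom_rel F (URel.invRight (F := F) i)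
  simpa [T] using h

lemma m04 : T F 0 * T F 4 = 1 := TmulL F 0
lemma m40 : T F 4 * T F 0 = 1 := TmulR F 0
lemma m15 : T F 1 * T F 5 = 1 := TmulL F 1
lemma m51 : T F 5 * T F 1 = 1 := TmulR F 1
lemma m26 : T F 2 * T F 6 = 1 := TmulL F 2
lemma m62 : T F 6 * T F 2 = 1 := TmulR F 2
lemma m37 : T F 3 * T F 7 = 1 := TmulL F 3
lemma m73 : T F 7 * T F 3 = 1 := TmulR F 3

lemma Tcent (i : Fin 4) (a : UDAHA F) :
    (T F (i.castAdd 4) + T F (i.addNat 4)) * a = a * (T F (i.castAdd 4) + T F (i.addNat 4)) := by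
  obtain ⟨x, rfl⟩ := RingQuot.mkAlgHom_surjective F (URel F) a
  have h := RingQuot.mkAlgHom_rel F (URel.central (F := F) i x)
  simpa [T] using h

lemma c04 (a : UDAHA F) : (T F 0 + T F 4) * a = a * (T F 0 + T F 4) := Tcent F 0 a
lemma c15 (a : UDAHA F) : (T F 1 + T F 5) * a = a * (T F 1 + T F 5) := Tcent F 1 a
lemma c26 (a : UDAHA F) : (T F 2 + T F 6) * a = a * (T F 2 + T F 6) := Tcent F 2 a
lemma c37 (a : UDAHA F) : (T F 3 + T F 7) * a = a * (T F 3 + T F 7) := Tcent F 3 a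

lemma pcent (a : UDAHA F) :
    (T F 0 * T F 1 * T F 2 * T F 3) * a = a * (T F 0 * T F 1 * T F 2 * T F 3) := by
  obtain ⟨x, rfl⟩ := RingQuot.mkAlgHom_surjective F (URel F) a
  have h := RingQuot.mkAlgHom_rel F (URel.prodCentral (F := F) x)
  simpa [T] using h

lemma mcancel {a b : UDAHA F} (h : a * b = 1) (x : UDAHA F) : a * (b * x) = x := by
  rw [← mul_assoc, h, one_mul]

lemma a04 (x) : T F 0 * (T F 4 * x) = x := mcancel F (m04 F) x
lemma a40 (x) : T F 4 * (T F 0 * x) = x := mcancel F (m40 F) x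
lemma a15 (x) : T F 1 * (T F 5 * x) = x := mcancel F (m15 F) x
lemma a51 (x) : T F 5 * (T F 1 * x) = x := mcancel F (m51 F) x
lemma a26 (x) : T F 2 * (T F 6 * x) = x := mcancel F (m26 F) x
lemma a62 (x) : T F 6 * (T F 2 * x) = x := mcancel F (m62 F) x
lemma a37 (x) : T F 3 * (T F 7 * x) = x := mcancel F (m37 F) x
lemma a73 (x) : T F 7 * (T F 3 * x) = x := mcancel F (m73 F) x

lemma ca0 : (((0:Fin 4)).castAdd 4) = (0:Fin 8) := rfl
lemma ca1 : (((1:Fin 4)).castAdd 4) = (1:Fin 8) := rfl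
lemma ca2 : (((2:Fin 4)).castAdd 4) = (2:Fin 8) := rfl
lemma ca3 : (((3:Fin 4)).castAdd 4) = (3:Fin 8) := rfl
lemma an0 : (((0:Fin 4)).addNat 4) = (4:Fin 8) := rfl
lemma an1 : (((1:Fin 4)).addNat 4) = (5:Fin 8) := rfl
lemma an2 : (((2:Fin 4)).addNat 4) = (6:Fin 8) := rfl
lemma an3 : (((3:Fin 4)).addNat 4) = (7:Fin 8) := rfl

noncomputable def fB : Fin 8 → UDAHA F
  | 0 => T F 7 * T F 2 * T F 3
  | 1 => T F 0
  | 2 => T F 1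
  | 3 => T F 3
  | 4 => T F 7 * T F 6 * T F 3
  | 5 => T F 4
  | 6 => T F 5
  | 7 => T F 7

noncomputable def fC : Fin 8 → UDAHA F
  | 0 => T F 1
  | 1 => T F 2
  | 2 => T F 3 * T F 0 * T F 7
  | 3 => T F 3
  | 4 => T F 5
  | 5 => T F 6
  | 6 => T F 3 * T F 4 * T F 7
  | 7 => T F 7

-- sums
lemma sB0 : T F 7 * T F 2 * T F 3 + T F 7 * T F 6 * T F 3 = T F 2 + T F 6 := by
  have h := c26 F (T F 3)
  calc T F 7 * T F 2 * T F 3 + T F 7 * T F 6 * T F 3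
      = T F 7 * ((T F 2 + T F 6) * T F 3) := by rw [mul_assoc, mul_assoc, ← mul_add, add_mul]
    _ = T F 7 * (T F 3 * (T F 2 + T F 6)) := by rw [h]
    _ = T F 2 + T F 6 := a73 F _

lemma sC2 : T F 3 * T F 0 * T F 7 + T F 3 * T F 4 * T F 7 = T F 0 + T F 4 := by
  have h := c04 F (T F 7)
  calc T F 3 * T F 0 * T F 7 + T F 3 * T F 4 * T F 7
      = T F 3 * ((T F 0 + T F 4) * T F 7) := by rw [mul_assoc, mul_assoc, ← mul_add, add_mul]
    _ = T F 3 * (T F 7 * (T F 0 + T F 4)) := by rw [h]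
    _ = T F 0 + T F 4 := a37 F _

-- product images of the central element
lemma ZB : T F 7 * T F 2 * T F 3 * T F 0 * T F 1 * T F 3 = T F 0 * T F 1 * T F 2 * T F 3 := by
  have h1 : T F 2 * T F 3 * T F 0 * T F 1 = T F 0 * T F 1 * T F 2 * T F 3 := by
    have h := pcent F (T F 2 * T F 3)
    calc T F 2 * T F 3 * T F 0 * T F 1
        = (T F 2 * T F 3) * (T F 0 * T F 1 * T F 2 * T F 3) * (T F 7 * T F 6) := by
          simp [mul_assoc, a37, a26, m26, m37, mul_one]
      _ = (T F 0 * T F 1 * T F 2 * T F 3) * (T F 2 * T F 3) * (T F 7 * T F 6) := by rw [← h]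
      _ = T F 0 * T F 1 * T F 2 * T F 3 := by
          simp [mul_assoc, a37, a26, m26, m37, mul_one]
  calc T F 7 * T F 2 * T F 3 * T F 0 * T F 1 * T F 3
      = T F 7 * (T F 2 * T F 3 * T F 0 * T F 1) * T F 3 := by
        simp [mul_assoc]
    _ = T F 7 * (T F 0 * T F 1 * T F 2 * T F 3) * T F 3 := by rw [h1]
    _ = (T F 0 * T F 1 * T F 2 * T F 3) * T F 7 * T F 3 := by rw [← pcent F (T F 7)]
    _ = T F 0 * T F 1 * T F 2 * T F 3 := by rw [mul_assoc, m73, mul_one]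

lemma ZC : T F 1 * T F 2 * (T F 3 * T F 0 * T F 7) * T F 3 = T F 0 * T F 1 * T F 2 * T F 3 := by
  have h1 : T F 1 * T F 2 * T F 3 * T F 0 = T F 0 * T F 1 * T F 2 * T F 3 := by
    have h := pcent F (T F 4)
    calc T F 1 * T F 2 * T F 3 * T F 0
        = T F 4 * (T F 0 * T F 1 * T F 2 * T F 3) * T F 0 := by
          simp [mul_assoc, a40]
      _ = (T F 0 * T F 1 * T F 2 * T F 3) * T F 4 * T F 0 := by rw [← h]
      _ = T F 0 * T F 1 * T F 2 * T F 3 := by rw [mul_assoc, m40, mul_one]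
  calc T F 1 * T F 2 * (T F 3 * T F 0 * T F 7) * T F 3
      = T F 1 * T F 2 * T F 3 * T F 0 := by
        simp [mul_assoc, a73, m73, mul_one]
    _ = T F 0 * T F 1 * T F 2 * T F 3 := h1

lemma hB : ∀ ⦃x y⦄, URel F x y →
    FreeAlgebra.lift F (fB F) x = FreeAlgebra.lift F (fB F) y := by
  intro x y h
  induction h with
  | invLeft i =>
      fin_cases i <;>
        simp [fB, ca0, ca1, ca2, ca3, an0, an1, an2, an3, mul_assoc,
          m04, m40, m15, m51, m26, m62, m37, m73,
          a04, a40, a15, a51, a26, a62, a37, a73]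
  | invRight i =>
      fin_cases i <;>
        simp [fB, ca0, ca1, ca2, ca3, an0, an1, an2, an3, mul_assoc,
          m04, m40, m15, m51, m26, m62, m37, m73,
          a04, a40, a15, a51, a26, a62, a37, a73]
  | central i a =>
      fin_cases i <;>
        simp [map_mul, map_add, FreeAlgebra.lift_ι_apply,
          ca0, ca1, ca2, ca3, an0, an1, an2, an3, fB, sB0, c04, c15, c26, c37]
  | prodCentral a =>
      simp only [map_mul, FreeAlgebra.lift_ι_apply, fB]
      rw [ZB, pcent]

lemma hC : ∀ ⦃x y⦄, URel F x y →
    FreeAlgebra.lift F (fC F) x = FreeAlgebra.lift F (fC F) y := by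
  intro x y h
  induction h with
  | invLeft i =>
      fin_cases i <;>
        simp [fC, ca0, ca1, ca2, ca3, an0, an1, an2, an3, mul_assoc,
          m04, m40, m15, m51, m26, m62, m37, m73,
          a04, a40, a15, a51, a26, a62, a37, a73]
  | invRight i =>
      fin_cases i <;>
        simp [fC, ca0, ca1, ca2, ca3, an0, an1, an2, an3, mul_assoc,
          m04, m40, m15, m51, m26, m62, m37, m73,
          a04, a40, a15, a51, a26, a62, a37, a73]
  | central i a =>
      fin_cases i <;>
        simp [map_mul, map_add, FreeAlgebra.lift_ι_apply,
          ca0, ca1, ca2, ca3, an0, an1, an2, an3, fC, sC2, c04, c15, c26, c37]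
  | prodCentral a =>
      simp only [map_mul, FreeAlgebra.lift_ι_apply, fC]
      rw [ZC, pcent]

noncomputable def Bh : UDAHA F →ₐ[F] UDAHA F :=
  RingQuot.liftAlgHom F ⟨FreeAlgebra.lift F (fB F), hB F⟩

noncomputable def Ch : UDAHA F →ₐ[F] UDAHA F :=
  RingQuot.liftAlgHom F ⟨FreeAlgebra.lift F (fC F), hC F⟩

lemma Bh_T (i : Fin 8) : Bh F (T F i) = fB F i := by
  simp [Bh, T, RingQuot.liftAlgHom_mkAlgHom_apply]

lemma Ch_T (i : Fin 8) : Ch F (T F i) = fC F i := by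
  simp [Ch, T, RingQuot.liftAlgHom_mkAlgHom_apply]

lemma BC (i : Fin 8) : Bh F (Ch F (T F i)) = T F i := by
  fin_cases i <;>
    simp [map_mul, Bh_T, Ch_T, fB, fC, mul_assoc,
      m04, m40, m15, m51, m26, m62, m37, m73,
      a04, a40, a15, a51, a26, a62, a37, a73]

lemma CB (i : Fin 8) : Ch F (Bh F (T F i)) = T F i := by
  fin_cases i <;>
    simp [map_mul, Bh_T, Ch_T, fB, fC, mul_assoc,
      m04, m40, m15, m51, m26, m62, m37, m73,
      a04, a40, a15, a51, a26, a62, a37, a73]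

lemma BCid : (Bh F).comp (Ch F) = AlgHom.id F (UDAHA F) := by
  apply RingQuot.ringQuot_ext'
  apply FreeAlgebra.hom_ext
  funext i
  exact BC F i

lemma CBid : (Ch F).comp (Bh F) = AlgHom.id F (UDAHA F) := by
  apply RingQuot.ringQuot_ext'
  apply FreeAlgebra.hom_ext
  funext i
  exact CB F i

noncomputable def Dh : UDAHA F →ₐ[F] UDAHA F where
  toFun h := T F 7 * h * T F 3
  map_one' := by
    show T F 7 * 1 * T F 3 = 1
    rw [mul_one, m73]
  map_mul' x y := by
    show T F 7 * (x * y) * T F 3 = (T F 7 * x * T F 3) * (T F 7 * y * T F 3)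
    simp [mul_assoc, a37]
  map_zero' := by
    show T F 7 * 0 * T F 3 = 0
    simp
  map_add' x y := by
    show T F 7 * (x + y) * T F 3 = T F 7 * x * T F 3 + T F 7 * y * T F 3
    rw [mul_add, add_mul]
  commutes' r := by
    simp [Algebra.algebraMap_eq_smul_one, mul_smul_comm, smul_mul_assoc, m73]

lemma B3_s11 (i : Fin 8) : Bh F (Bh F (Bh F (T F i))) = Dh F (T F i) := by
  fin_cases i <;>
    simp [map_mul, Bh_T, fB, Dh, mul_assoc,
      m04, m40, m15, m51, m26, m62, m37, m73,
      a04, a40, a15, a51, a26, a62, a37, a73]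

lemma B3comp : (Bh F).comp ((Bh F).comp (Bh F)) = Dh F := by
  apply RingQuot.ringQuot_ext'
  apply FreeAlgebra.hom_ext
  funext i
  exact B3_s11 F i

theorem stmt_11 (F : Type) [Field F] :
    ∃ B : UDAHA F ≃ₐ[F] UDAHA F,
      B (T F 0) = T F 7 * T F 2 * T F 3 ∧
      B (T F 1) = T F 0 ∧ B (T F 2) = T F 1 ∧ B (T F 3) = T F 3 ∧
      ∀ h : UDAHA F, B (B (B h)) = T F 7 * h * T F 3 := by
  refine ⟨AlgEquiv.ofAlgHom (Bh F) (Ch F) (BCid F) (CBid F), ?_, ?_, ?_, ?_, ?_⟩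
  · exact Bh_T F 0
  · exact Bh_T F 1
  · exact Bh_T F 2
  · exact Bh_T F 3
  · intro h
    have := DFunLike.congr_fun (B3comp F) h
    simpa [Dh] using this
end

section
/- Let Ĥ be the universal double affine Hecke algebra of type (C₁^∨, C₁). There exists an algebra automorphism C of Ĥ sending t₀^∨ ↦ t₁^{-1} t₁^∨ t₁, t₀ ↦ t₀^∨ t₀ (t₀^∨)^{-1}, t₁^∨ ↦ t₀^∨, t₁ ↦ t₁, and C² equals the inner automorphism h ↦ t₁^{-1} h t₁. -/
namespace UDAHAaux
variable (F : Type) [Field F]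

lemma rel {a b : FreeAlgebra F (Fin 8)} (h : URel F a b) :
    RingQuot.mkAlgHom F (URel F) a = RingQuot.mkAlgHom F (URel F) b :=
  RingQuot.mkAlgHom_rel F h

lemma invL (i : Fin 4) : T F (i.castAdd 4) * T F (i.addNat 4) = 1 := by
  simpa [T, map_mul, map_one] using rel F (URel.invLeft (F := F) i)

lemma invR (i : Fin 4) : T F (i.addNat 4) * T F (i.castAdd 4) = 1 := by
  simpa [T, map_mul, map_one] using rel F (URel.invRight (F := F) i)

lemma centralS (i : Fin 4) (b : UDAHA F) :
    (T F (i.castAdd 4) + T F (i.addNat 4)) * b = b * (T F (i.castAdd 4) + T F (i.addNat 4)) := by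
  obtain ⟨a, rfl⟩ := RingQuot.mkAlgHom_surjective F (URel F) b
  simpa [T, map_mul, map_add] using rel F (URel.central (F := F) i a)

lemma prodC (b : UDAHA F) :
    (T F 0 * T F 1 * T F 2 * T F 3) * b = b * (T F 0 * T F 1 * T F 2 * T F 3) := by
  obtain ⟨a, rfl⟩ := RingQuot.mkAlgHom_surjective F (URel F) b
  simpa [T, map_mul] using rel F (URel.prodCentral (F := F) a)

-- cancellation
lemma cancel_left {u v a b : UDAHA F} (hvu : v * u = 1) (h : u * a = u * b) : a = b := by
  have := congrArg (v * ·) h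
  simpa only [← mul_assoc, hvu, one_mul] using this

lemma cancel_right {u v a b : UDAHA F} (huv : u * v = 1) (h : a * u = b * u) : a = b := by
  have := congrArg (· * v) h
  simpa only [mul_assoc, huv, mul_one] using this

-- concrete inverse pairs
lemma p04 : T F 0 * T F 4 = 1 := invL F 0
lemma p15 : T F 1 * T F 5 = 1 := invL F 1
lemma p26 : T F 2 * T F 6 = 1 := invL F 2
lemma p37 : T F 3 * T F 7 = 1 := invL F 3
lemma p40 : T F 4 * T F 0 = 1 := invR F 0
lemma p51 : T F 5 * T F 1 = 1 := invR F 1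
lemma p62 : T F 6 * T F 2 = 1 := invR F 2
lemma p73 : T F 7 * T F 3 = 1 := invR F 3

lemma q04 (x : UDAHA F) : T F 0 * (T F 4 * x) = x := by rw [← mul_assoc, p04, one_mul]
lemma q15 (x : UDAHA F) : T F 1 * (T F 5 * x) = x := by rw [← mul_assoc, p15, one_mul]
lemma q26 (x : UDAHA F) : T F 2 * (T F 6 * x) = x := by rw [← mul_assoc, p26, one_mul]
lemma q37 (x : UDAHA F) : T F 3 * (T F 7 * x) = x := by rw [← mul_assoc, p37, one_mul]
lemma q40 (x : UDAHA F) : T F 4 * (T F 0 * x) = x := by rw [← mul_assoc, p40, one_mul]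
lemma q51 (x : UDAHA F) : T F 5 * (T F 1 * x) = x := by rw [← mul_assoc, p51, one_mul]
lemma q62 (x : UDAHA F) : T F 6 * (T F 2 * x) = x := by rw [← mul_assoc, p62, one_mul]
lemma q73 (x : UDAHA F) : T F 7 * (T F 3 * x) = x := by rw [← mul_assoc, p73, one_mul]

-- central sums with numerals
lemma c04 (b : UDAHA F) : (T F 0 + T F 4) * b = b * (T F 0 + T F 4) := centralS F 0 b
lemma c15 (b : UDAHA F) : (T F 1 + T F 5) * b = b * (T F 1 + T F 5) := centralS F 1 b
lemma c26 (b : UDAHA F) : (T F 2 + T F 6) * b = b * (T F 2 + T F 6) := centralS F 2 b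
lemma c37 (b : UDAHA F) : (T F 3 + T F 7) * b = b * (T F 3 + T F 7) := centralS F 3 b

lemma P_assoc (x : UDAHA F) :
    T F 0 * (T F 1 * (T F 2 * (T F 3 * x))) = (T F 0 * T F 1 * T F 2 * T F 3) * x := by
  simp only [mul_assoc]

lemma Pshift (a x : UDAHA F) :
    a * (T F 0 * (T F 1 * (T F 2 * (T F 3 * x)))) =
      T F 0 * (T F 1 * (T F 2 * (T F 3 * (a * x)))) := by
  rw [P_assoc, P_assoc, ← mul_assoc, ← prodC, mul_assoc]

lemma key1 : (T F 0 * T F 1) * (T F 2 * T F 3) = (T F 2 * T F 3) * (T F 0 * T F 1) := by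
  refine cancel_right F (u := T F 2 * T F 3) (v := T F 7 * T F 6) ?_ ?_
  · rw [mul_assoc, ← mul_assoc (T F 3), p37, one_mul, p26]
  · have h := prodC F (T F 2 * T F 3)
    calc (T F 0 * T F 1) * (T F 2 * T F 3) * (T F 2 * T F 3)
        = (T F 0 * T F 1 * T F 2 * T F 3) * (T F 2 * T F 3) := by simp only [mul_assoc]
      _ = (T F 2 * T F 3) * (T F 0 * T F 1 * T F 2 * T F 3) := h
      _ = (T F 2 * T F 3) * (T F 0 * T F 1) * (T F 2 * T F 3) := by simp only [mul_assoc]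

lemma key1' (x : UDAHA F) :
    T F 2 * (T F 3 * (T F 0 * (T F 1 * x))) = T F 0 * (T F 1 * (T F 2 * (T F 3 * x))) := by
  simpa only [mul_assoc] using congrArg (· * x) (key1 F).symm

/-- images of the 8 generators under the automorphism C -/
noncomputable def g : Fin 8 → UDAHA F := fun i =>
  match i with
  | ⟨0, _⟩ => T F 7 * T F 2 * T F 3
  | ⟨1, _⟩ => T F 0 * T F 1 * T F 4
  | ⟨2, _⟩ => T F 0
  | ⟨3, _⟩ => T F 3
  | ⟨4, _⟩ => T F 7 * T F 6 * T F 3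
  | ⟨5, _⟩ => T F 0 * T F 5 * T F 4
  | ⟨6, _⟩ => T F 4
  | ⟨7, _⟩ => T F 7

lemma f_rel : ∀ ⦃x y : FreeAlgebra F (Fin 8)⦄, URel F x y →
    FreeAlgebra.lift F (g F) x = FreeAlgebra.lift F (g F) y := by
  intro x y h
  induction h with
  | invLeft i =>
    fin_cases i <;> simp only [map_mul, map_one, FreeAlgebra.lift_ι_apply]
    · show (T F 7 * T F 2 * T F 3) * (T F 7 * T F 6 * T F 3) = 1
      simp only [mul_assoc, q37, q26, q73, p73]
    · show (T F 0 * T F 1 * T F 4) * (T F 0 * T F 5 * T F 4) = 1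
      simp only [mul_assoc, q40, q15, q04, p04]
    · show T F 0 * T F 4 = 1
      exact p04 F
    · show T F 3 * T F 7 = 1
      exact p37 F
  | invRight i =>
    fin_cases i <;> simp only [map_mul, map_one, FreeAlgebra.lift_ι_apply]
    · show (T F 7 * T F 6 * T F 3) * (T F 7 * T F 2 * T F 3) = 1
      simp only [mul_assoc, q37, q62, q73, p73]
    · show (T F 0 * T F 5 * T F 4) * (T F 0 * T F 1 * T F 4) = 1
      simp only [mul_assoc, q40, q51, q04, p04]
    · show T F 4 * T F 0 = 1
      exact p40 F
    · show T F 7 * T F 3 = 1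
      exact p73 F
  | central i a =>
    fin_cases i <;> simp only [map_mul, map_add, FreeAlgebra.lift_ι_apply]
    · show (T F 7 * T F 2 * T F 3 + T F 7 * T F 6 * T F 3) * _ =
        _ * (T F 7 * T F 2 * T F 3 + T F 7 * T F 6 * T F 3)
      have h : T F 7 * T F 2 * T F 3 + T F 7 * T F 6 * T F 3 = T F 2 + T F 6 := by
        have : T F 7 * T F 2 * T F 3 + T F 7 * T F 6 * T F 3
            = T F 7 * ((T F 2 + T F 6) * T F 3) := by
          rw [add_mul, mul_add, mul_assoc, mul_assoc]
        rw [this, c26, ← mul_assoc, p73, one_mul]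
      rw [h]; exact c26 F _
    · show (T F 0 * T F 1 * T F 4 + T F 0 * T F 5 * T F 4) * _ =
        _ * (T F 0 * T F 1 * T F 4 + T F 0 * T F 5 * T F 4)
      have h : T F 0 * T F 1 * T F 4 + T F 0 * T F 5 * T F 4 = T F 1 + T F 5 := by
        have : T F 0 * T F 1 * T F 4 + T F 0 * T F 5 * T F 4
            = T F 0 * ((T F 1 + T F 5) * T F 4) := by
          rw [add_mul, mul_add, mul_assoc, mul_assoc]
        rw [this, c15, ← mul_assoc, p04, one_mul]
      rw [h]; exact c15 F _
    · show (T F 0 + T F 4) * _ = _ * (T F 0 + T F 4)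
      exact c04 F _
    · show (T F 3 + T F 7) * _ = _ * (T F 3 + T F 7)
      exact c37 F _
  | prodCentral a =>
    simp only [map_mul, FreeAlgebra.lift_ι_apply]
    show ((T F 7 * T F 2 * T F 3) * (T F 0 * T F 1 * T F 4) * T F 0 * T F 3) * _ =
      _ * ((T F 7 * T F 2 * T F 3) * (T F 0 * T F 1 * T F 4) * T F 0 * T F 3)
    have h : (T F 7 * T F 2 * T F 3) * (T F 0 * T F 1 * T F 4) * T F 0 * T F 3
        = T F 0 * T F 1 * T F 2 * T F 3 := by
      calc (T F 7 * T F 2 * T F 3) * (T F 0 * T F 1 * T F 4) * T F 0 * T F 3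
          = T F 7 * (T F 2 * (T F 3 * (T F 0 * (T F 1 * (T F 4 * (T F 0 * T F 3)))))) := by
            simp only [mul_assoc]
        _ = T F 7 * (T F 2 * (T F 3 * (T F 0 * (T F 1 * T F 3)))) := by rw [q40]
        _ = T F 7 * (T F 0 * (T F 1 * (T F 2 * (T F 3 * T F 3)))) := by rw [key1']
        _ = T F 0 * (T F 1 * (T F 2 * (T F 3 * (T F 7 * T F 3)))) := by rw [Pshift]
        _ = T F 0 * T F 1 * T F 2 * T F 3 := by rw [p73, mul_one, ← mul_assoc, ← mul_assoc]
    rw [h]; exact prodC F _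

/-- The algebra endomorphism C. -/
noncomputable def C0 : UDAHA F →ₐ[F] UDAHA F :=
  RingQuot.liftAlgHom F ⟨FreeAlgebra.lift F (g F), f_rel F⟩

lemma CT (i : Fin 8) : C0 F (T F i) = g F i := by
  show RingQuot.liftAlgHom F ⟨_, f_rel F⟩ (RingQuot.mkAlgHom F (URel F) (FreeAlgebra.ι F i)) = _
  rw [RingQuot.liftAlgHom_mkAlgHom_apply, FreeAlgebra.lift_ι_apply]

lemma CT0 : C0 F (T F 0) = T F 7 * T F 2 * T F 3 := CT F 0
lemma CT1 : C0 F (T F 1) = T F 0 * T F 1 * T F 4 := CT F 1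
lemma CT2 : C0 F (T F 2) = T F 0 := CT F 2
lemma CT3 : C0 F (T F 3) = T F 3 := CT F 3
lemma CT4 : C0 F (T F 4) = T F 7 * T F 6 * T F 3 := CT F 4
lemma CT5 : C0 F (T F 5) = T F 0 * T F 5 * T F 4 := CT F 5
lemma CT6 : C0 F (T F 6) = T F 4 := CT F 6
lemma CT7 : C0 F (T F 7) = T F 7 := CT F 7

lemma CC0 : C0 F (C0 F (T F 0)) = T F 7 * T F 0 * T F 3 := by
  rw [CT0, map_mul, map_mul, CT7, CT2, CT3]
lemma CC2 : C0 F (C0 F (T F 2)) = T F 7 * T F 2 * T F 3 := by rw [CT2, CT0]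
lemma CC3 : C0 F (C0 F (T F 3)) = T F 7 * T F 3 * T F 3 := by
  rw [CT3, CT3, p73, one_mul]
lemma CC4 : C0 F (C0 F (T F 4)) = T F 7 * T F 4 * T F 3 := by
  rw [CT4, map_mul, map_mul, CT7, CT6, CT3]
lemma CC6 : C0 F (C0 F (T F 6)) = T F 7 * T F 6 * T F 3 := by rw [CT6, CT4]
lemma CC7 : C0 F (C0 F (T F 7)) = T F 7 * T F 7 * T F 3 := by
  rw [CT7, CT7, mul_assoc, p73, mul_one]

lemma CC1 : C0 F (C0 F (T F 1)) = T F 7 * T F 1 * T F 3 := by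
  rw [CT1, map_mul, map_mul, CT0, CT1, CT4]
  have hR : T F 7 * T F 1 * T F 3
      = T F 0 * (T F 1 * (T F 2 * (T F 3 * (T F 7 * (T F 4 * (T F 7 * (T F 6 * T F 3))))))) := by
    calc T F 7 * T F 1 * T F 3 = T F 7 * (T F 1 * T F 3) := mul_assoc _ _ _
      _ = T F 7 * (T F 4 * (T F 0 * (T F 1 * T F 3))) := by rw [q40]
      _ = T F 7 * (T F 4 * (T F 0 * (T F 1 * (T F 2 * (T F 6 * T F 3))))) := by rw [q26]
      _ = T F 7 * (T F 4 * (T F 0 * (T F 1 * (T F 2 * (T F 3 * (T F 7 * (T F 6 * T F 3))))))) := by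
          rw [q37]
      _ = T F 7 * (T F 0 * (T F 1 * (T F 2 * (T F 3 * (T F 4 * (T F 7 * (T F 6 * T F 3))))))) := by
          rw [Pshift]
      _ = T F 0 * (T F 1 * (T F 2 * (T F 3 * (T F 7 * (T F 4 * (T F 7 * (T F 6 * T F 3))))))) := by
          rw [Pshift]
  rw [hR]
  calc (T F 7 * T F 2 * T F 3) * (T F 0 * T F 1 * T F 4) * (T F 7 * T F 6 * T F 3)
      = T F 7 * (T F 2 * (T F 3 * (T F 0 * (T F 1 * (T F 4 * (T F 7 * (T F 6 * T F 3))))))) := by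
        simp only [mul_assoc]
    _ = T F 7 * (T F 0 * (T F 1 * (T F 2 * (T F 3 * (T F 4 * (T F 7 * (T F 6 * T F 3))))))) := by
        rw [key1']
    _ = T F 0 * (T F 1 * (T F 2 * (T F 3 * (T F 7 * (T F 4 * (T F 7 * (T F 6 * T F 3))))))) := by
        rw [Pshift]

lemma CC5 : C0 F (C0 F (T F 5)) = T F 7 * T F 5 * T F 3 := by
  have h1 : (T F 7 * T F 1 * T F 3) * C0 F (C0 F (T F 5)) = 1 := by
    rw [← CC1, ← map_mul, ← map_mul, p15, map_one, map_one]
  have h2 : (T F 7 * T F 1 * T F 3) * (T F 7 * T F 5 * T F 3) = 1 := by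
    simp only [mul_assoc, q37, q15, p73]
  exact cancel_left F (v := T F 7 * T F 5 * T F 3)
    (by simp only [mul_assoc, q37, q51, p73]) (h1.trans h2.symm)

/-- Conjugation by t₁ (inner automorphism), as an algebra map. -/
noncomputable def Ad : UDAHA F →ₐ[F] UDAHA F where
  toFun h := T F 7 * h * T F 3
  map_one' := by show T F 7 * 1 * T F 3 = 1; rw [mul_one, p73]
  map_mul' x y := by
    show T F 7 * (x * y) * T F 3 = (T F 7 * x * T F 3) * (T F 7 * y * T F 3)
    simp only [mul_assoc, q37]
  map_zero' := by show T F 7 * 0 * T F 3 = 0; rw [mul_zero, zero_mul]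
  map_add' x y := by
    show T F 7 * (x + y) * T F 3 = T F 7 * x * T F 3 + T F 7 * y * T F 3
    rw [mul_add, add_mul]
  commutes' r := by
    show T F 7 * algebraMap F (UDAHA F) r * T F 3 = algebraMap F (UDAHA F) r
    rw [show T F 7 * algebraMap F (UDAHA F) r = algebraMap F (UDAHA F) r * T F 7 from
      (Algebra.commutes r (T F 7)).symm, mul_assoc, p73, mul_one]

/-- Inverse conjugation. -/
noncomputable def Ad' : UDAHA F →ₐ[F] UDAHA F where
  toFun h := T F 3 * h * T F 7
  map_one' := by show T F 3 * 1 * T F 7 = 1; rw [mul_one, p37]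
  map_mul' x y := by
    show T F 3 * (x * y) * T F 7 = (T F 3 * x * T F 7) * (T F 3 * y * T F 7)
    simp only [mul_assoc, q73]
  map_zero' := by show T F 3 * 0 * T F 7 = 0; rw [mul_zero, zero_mul]
  map_add' x y := by
    show T F 3 * (x + y) * T F 7 = T F 3 * x * T F 7 + T F 3 * y * T F 7
    rw [mul_add, add_mul]
  commutes' r := by
    show T F 3 * algebraMap F (UDAHA F) r * T F 7 = algebraMap F (UDAHA F) r
    rw [show T F 3 * algebraMap F (UDAHA F) r = algebraMap F (UDAHA F) r * T F 3 from
      (Algebra.commutes r (T F 3)).symm, mul_assoc, p37, mul_one]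

lemma hKey : (C0 F).comp (C0 F) = Ad F := by
  apply RingQuot.ringQuot_ext'
  refine FreeAlgebra.hom_ext (funext fun i => ?_)
  show C0 F (C0 F (T F i)) = T F 7 * T F i * T F 3
  fin_cases i
  · exact CC0 F
  · exact CC1 F
  · exact CC2 F
  · exact CC3 F
  · exact CC4 F
  · exact CC5 F
  · exact CC6 F
  · exact CC7 F

lemma key (x : UDAHA F) : C0 F (C0 F x) = T F 7 * x * T F 3 := AlgHom.congr_fun (hKey F) x

lemma comm (y : UDAHA F) : C0 F (Ad' F y) = Ad' F (C0 F y) := by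
  show C0 F (T F 3 * y * T F 7) = T F 3 * C0 F y * T F 7
  rw [map_mul, map_mul, CT3, CT7]

/-- C as an algebra automorphism. -/
noncomputable def Ceq : UDAHA F ≃ₐ[F] UDAHA F :=
  AlgEquiv.ofAlgHom (C0 F) ((Ad' F).comp (C0 F))
    (AlgHom.ext fun x => by
      show C0 F (Ad' F (C0 F x)) = x
      rw [comm, key]
      show T F 3 * (T F 7 * x * T F 3) * T F 7 = x
      simp only [mul_assoc, q37, p37, mul_one])
    (AlgHom.ext fun x => by
      show Ad' F (C0 F (C0 F x)) = x
      rw [key]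
      show T F 3 * (T F 7 * x * T F 3) * T F 7 = x
      simp only [mul_assoc, q37, p37, mul_one])

end UDAHAaux

theorem stmt_12 (F : Type) [Field F] :
    ∃ C : UDAHA F ≃ₐ[F] UDAHA F,
      C (T F 0) = T F 7 * T F 2 * T F 3 ∧
      C (T F 1) = T F 0 * T F 1 * T F 4 ∧ C (T F 2) = T F 0 ∧ C (T F 3) = T F 3 ∧
      ∀ h : UDAHA F, C (C h) = T F 7 * h * T F 3 := by
  exact ⟨UDAHAaux.Ceq F, UDAHAaux.CT0 F, UDAHAaux.CT1 F, UDAHAaux.CT2 F, UDAHAaux.CT3 F,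
    UDAHAaux.key F⟩
end

section
/- The braid group B₃ = ⟨b, c | b³ = c²⟩ acts on the universal double affine Hecke algebra Ĥ of type (C₁^∨, C₁) by algebra automorphisms, where b acts by t₀^∨ ↦ t₁^{-1} t₁^∨ t₁, t₀ ↦ t₀^∨, t₁^∨ ↦ t₀, t₁ ↦ t₁, c acts by t₀^∨ ↦ t₁^{-1} t₁^∨ t₁, t₀ ↦ t₀^∨ t₀ (t₀^∨)^{-1}, t₁^∨ ↦ t₀^∨, t₁ ↦ t₁, and the central element a = b³ = c² acts by h ↦ t₁^{-1} h t₁. -/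
/-- Relations for Artin's braid group B₃ = ⟨b,c | b³ = c²⟩, generator 0 = b, 1 = c. -/
def B3rels : Set (FreeGroup (Fin 2)) :=
  {FreeGroup.of 0 ^ 3 * (FreeGroup.of 1 ^ 2)⁻¹}

/-- Artin's braid group on three strands. -/
abbrev B3 := PresentedGroup B3rels

/-!
An algebra map out of the universal DAHA is the same as a quadruple of units
`(t₀^∨, t₀, t₁^∨, t₁)` with every `tᵢ + tᵢ⁻¹` and the product `t₀^∨ t₀ t₁^∨ t₁` central. The
proposed images of the generators under `b` and `c` are the quadruples `braidB t` and `braidC t`;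
they again satisfy the relations, since every cyclic rotation of the central product equals it.
Precomposing with these maps acts on quadruples by `braidB` and `braidC`, and a computation in the
unit group shows that `braidB` applied three times and `braidC` applied twice both conjugate by
`t₁`, the latter because the product is central. So `b³` and `c²` both act as the inner
automorphism `x ↦ t₁⁻¹ x t₁`; in particular `b` and `c` act invertibly and respect `b³ = c²`.
-/

section BraidMoves

variable {G H : Type*} [Group G] [Group H]

def braidB (t : Fin 4 → G) : Fin 4 → G := ![(t 3)⁻¹ * t 2 * t 3, t 0, t 1, t 3]

def braidC (t : Fin 4 → G) : Fin 4 → G := ![(t 3)⁻¹ * t 2 * t 3, t 0 * t 1 * (t 0)⁻¹, t 0, t 3]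

theorem MonoidHom.comp_braidB (φ : G →* H) (t : Fin 4 → G) : φ ∘ braidB t = braidB (φ ∘ t) := by
  ext i; fin_cases i <;> simp [braidB]

theorem MonoidHom.comp_braidC (φ : G →* H) (t : Fin 4 → G) : φ ∘ braidC t = braidC (φ ∘ t) := by
  ext i; fin_cases i <;> simp [braidC]

theorem inv_mul_mul_self_of_mem_center {z : G} (h : z ∈ Set.center G) (x : G) :
    x⁻¹ * z * x = z := by
  rw [Semigroup.mem_center_iff.mp h x⁻¹, inv_mul_cancel_right]

theorem braidB_braidB_braidB (t : Fin 4 → G) :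
    braidB (braidB (braidB t)) = fun i => (t 3)⁻¹ * t i * t 3 := by
  ext i; fin_cases i <;> simp [braidB, mul_assoc]

variable {t : Fin 4 → G}

theorem mul_mul_mul_rotate_one (h : t 0 * t 1 * t 2 * t 3 ∈ Set.center G) :
    t 1 * t 2 * t 3 * t 0 = t 0 * t 1 * t 2 * t 3 :=
  calc _ = (t 0)⁻¹ * (t 0 * t 1 * t 2 * t 3) * t 0 := by group
    _ = _ := inv_mul_mul_self_of_mem_center h _

theorem mul_mul_mul_rotate_two (h : t 0 * t 1 * t 2 * t 3 ∈ Set.center G) :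
    t 2 * t 3 * t 0 * t 1 = t 0 * t 1 * t 2 * t 3 :=
  calc _ = (t 0 * t 1)⁻¹ * (t 0 * t 1 * t 2 * t 3) * (t 0 * t 1) := by group
    _ = _ := inv_mul_mul_self_of_mem_center h _

theorem braidC_braidC (h : t 0 * t 1 * t 2 * t 3 ∈ Set.center G) :
    braidC (braidC t) = fun i => (t 3)⁻¹ * t i * t 3 := by
  ext i; fin_cases i
  · simp [braidC, mul_assoc]
  · calc braidC (braidC t) 1
        = (t 3)⁻¹ * (t 2 * t 3 * t 0 * t 1) * (t 1 * t 2 * t 3 * t 0)⁻¹ * t 1 * t 3 := by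
          simp only [braidC, Matrix.cons_val]; group
      _ = _ := by
          rw [mul_mul_mul_rotate_two h, mul_mul_mul_rotate_one h, mul_inv_cancel_right]; rfl
  all_goals simp [braidC, mul_assoc]

theorem braidB_prod (h : t 0 * t 1 * t 2 * t 3 ∈ Set.center G) :
    braidB t 0 * braidB t 1 * braidB t 2 * braidB t 3 = t 0 * t 1 * t 2 * t 3 :=
  calc _ = (t 3)⁻¹ * (t 2 * t 3 * t 0 * t 1) * t 3 := by
        simp only [braidB, Matrix.cons_val]; group
    _ = _ := by rw [mul_mul_mul_rotate_two h, inv_mul_mul_self_of_mem_center h]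

theorem braidC_prod (h : t 0 * t 1 * t 2 * t 3 ∈ Set.center G) :
    braidC t 0 * braidC t 1 * braidC t 2 * braidC t 3 = t 0 * t 1 * t 2 * t 3 :=
  calc _ = (t 3)⁻¹ * (t 2 * t 3 * t 0 * t 1) * t 3 := by
        simp only [braidC, Matrix.cons_val]; group
    _ = _ := by rw [mul_mul_mul_rotate_two h, inv_mul_mul_self_of_mem_center h]

end BraidMoves

section DAHATuple

variable {A : Type*} [Semiring A] {t : Fin 4 → Aˣ}

structure IsDAHATuple (t : Fin 4 → Aˣ) : Prop where
  add_inv_mem_center (i : Fin 4) : (t i : A) + ↑(t i)⁻¹ ∈ Set.center A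
  prod_mem_center : ((t 0 * t 1 * t 2 * t 3 : Aˣ) : A) ∈ Set.center A

theorem Units.conj_add_conj_inv_mem_center (u x : Aˣ) (h : (x : A) + ↑x⁻¹ ∈ Set.center A) :
    ((u * x * u⁻¹ : Aˣ) : A) + ↑(u * x * u⁻¹)⁻¹ ∈ Set.center A := by
  have : ((u * x * u⁻¹ : Aˣ) : A) + ↑(u * x * u⁻¹)⁻¹ = ↑x + ↑x⁻¹ :=
    calc _ = (u : A) * (↑x + ↑x⁻¹) * ↑u⁻¹ := by simp [mul_add, add_mul, mul_assoc]
      _ = _ := by rw [Semigroup.mem_center_iff.mp h, mul_assoc, Units.mul_inv, mul_one]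
  rwa [this]

theorem isDAHATuple_braidB (ht : IsDAHATuple t) : IsDAHATuple (braidB t) where
  add_inv_mem_center i := by
    fin_cases i
    · simpa [braidB] using (t 3)⁻¹.conj_add_conj_inv_mem_center (t 2) (ht.add_inv_mem_center 2)
    exacts [ht.add_inv_mem_center 0, ht.add_inv_mem_center 1, ht.add_inv_mem_center 3]
  prod_mem_center := by
    rw [braidB_prod (Set.subset_center_units ht.prod_mem_center)]
    exact ht.prod_mem_center

theorem isDAHATuple_braidC (ht : IsDAHATuple t) : IsDAHATuple (braidC t) where
  add_inv_mem_center i := by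
    fin_cases i
    · simpa [braidC] using (t 3)⁻¹.conj_add_conj_inv_mem_center (t 2) (ht.add_inv_mem_center 2)
    · exact (t 0).conj_add_conj_inv_mem_center (t 1) (ht.add_inv_mem_center 1)
    exacts [ht.add_inv_mem_center 0, ht.add_inv_mem_center 3]
  prod_mem_center := by
    rw [braidC_prod (Set.subset_center_units ht.prod_mem_center)]
    exact ht.prod_mem_center

end DAHATuple

namespace UDAHA

variable {F : Type} [Field F] {A : Type*} [Semiring A] [Algebra F A]

theorem T_castAdd_mul_T_addNat (i : Fin 4) : T F (i.castAdd 4) * T F (i.addNat 4) = 1 := by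
  simpa [T] using RingQuot.mkAlgHom_rel F (URel.invLeft (F := F) i)

theorem T_addNat_mul_T_castAdd (i : Fin 4) : T F (i.addNat 4) * T F (i.castAdd 4) = 1 := by
  simpa [T] using RingQuot.mkAlgHom_rel F (URel.invRight (F := F) i)

variable (F) in
noncomputable def gen (i : Fin 4) : (UDAHA F)ˣ :=
  ⟨T F (i.castAdd 4), T F (i.addNat 4), T_castAdd_mul_T_addNat i, T_addNat_mul_T_castAdd i⟩

theorem isDAHATuple_gen : IsDAHATuple (gen F) where
  add_inv_mem_center i := Semigroup.mem_center_iff.mpr fun x => by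
    obtain ⟨y, rfl⟩ := RingQuot.mkAlgHom_surjective F (URel F) x
    simpa [T, gen] using (RingQuot.mkAlgHom_rel F (URel.central i y)).symm
  prod_mem_center := Semigroup.mem_center_iff.mpr fun x => by
    obtain ⟨y, rfl⟩ := RingQuot.mkAlgHom_surjective F (URel F) x
    simpa [T, gen] using (RingQuot.mkAlgHom_rel F (URel.prodCentral y)).symm

def genValue (t : Fin 4 → Aˣ) (i : Fin 8) : A :=
  if h : (i : ℕ) < 4 then t ⟨i, h⟩ else ↑(t ⟨i - 4, by omega⟩)⁻¹

@[simp]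
theorem genValue_castAdd (t : Fin 4 → Aˣ) (i : Fin 4) : genValue t (i.castAdd 4) = t i := by
  simp [genValue]

@[simp]
theorem genValue_addNat (t : Fin 4 → Aˣ) (i : Fin 4) : genValue t (i.addNat 4) = ↑(t i)⁻¹ := by
  simp [genValue]

variable (F) in
noncomputable def lift (t : Fin 4 → Aˣ) (ht : IsDAHATuple t) : UDAHA F →ₐ[F] A :=
  RingQuot.liftAlgHom F ⟨FreeAlgebra.lift F (genValue t), fun x y h => by
    induction h with
    | invLeft i => simp
    | invRight i => simp
    | central i a =>
      simpa using (Semigroup.mem_center_iff.mp (ht.add_inv_mem_center i) _).symm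
    | prodCentral a =>
      simpa [genValue] using (Semigroup.mem_center_iff.mp ht.prod_mem_center _).symm⟩

noncomputable def tuple (f : UDAHA F →ₐ[F] A) (i : Fin 4) : Aˣ :=
  Units.map (f : UDAHA F →* A) (gen F i)

theorem lift_gen (t : Fin 4 → Aˣ) (ht : IsDAHATuple t) (i : Fin 4) :
    lift F t ht (gen F i) = t i := by
  simp [lift, gen, T]

theorem tuple_lift (t : Fin 4 → Aˣ) (ht : IsDAHATuple t) : tuple (lift F t ht) = t := by
  ext i
  exact lift_gen t ht i

theorem tuple_comp {B : Type*} [Semiring B] [Algebra F B] (f : A →ₐ[F] B) (g : UDAHA F →ₐ[F] A) :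
    tuple (f.comp g) = Units.map (f : A →* B) ∘ tuple g := by
  ext i
  simp [tuple]

theorem hom_ext {f g : UDAHA F →ₐ[F] A} (h : tuple f = tuple g) : f = g := by
  have h_inv (i : Fin 4) : (tuple f i)⁻¹ = (tuple g i)⁻¹ := by rw [h]
  apply RingQuot.ringQuot_ext'
  apply FreeAlgebra.hom_ext
  funext i
  obtain ⟨j, rfl | rfl⟩ : ∃ j : Fin 4, i = j.castAdd 4 ∨ i = j.addNat 4 := by
    revert i; decide
  · exact congrArg Units.val (congrFun h j)
  · exact congrArg Units.val (h_inv j)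

section Automorphisms

variable (F)

noncomputable def conjT₁ : UDAHA F ≃ₐ[F] UDAHA F :=
  MulSemiringAction.toAlgEquiv F (UDAHA F) (ConjAct.toConjAct (gen F 3)⁻¹)

noncomputable def braidBHom : UDAHA F →ₐ[F] UDAHA F :=
  lift F (braidB (gen F)) (isDAHATuple_braidB isDAHATuple_gen)

noncomputable def braidCHom : UDAHA F →ₐ[F] UDAHA F :=
  lift F (braidC (gen F)) (isDAHATuple_braidC isDAHATuple_gen)

variable {F}

theorem conjT₁_apply (x : UDAHA F) : conjT₁ F x = T F 7 * x * T F 3 := by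
  simp [conjT₁, ConjAct.units_smul_def, gen]

theorem tuple_conjT₁ :
    tuple (conjT₁ F : UDAHA F →ₐ[F] UDAHA F) = fun i => (gen F 3)⁻¹ * gen F i * gen F 3 := by
  ext i
  simp [tuple, conjT₁, ConjAct.units_smul_def]

theorem tuple_pow {f : UDAHA F →ₐ[F] UDAHA F} {τ : (Fin 4 → (UDAHA F)ˣ) → Fin 4 → (UDAHA F)ˣ}
    (hf : ∀ g, tuple (g.comp f) = τ (tuple g)) (n : ℕ) : tuple (f ^ n) = τ^[n] (gen F) := by
  induction n with
  | zero => ext i; rfl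
  | succ n ih =>
    rw [pow_succ, Function.iterate_succ_apply', ← ih]
    exact hf (f ^ n)

theorem tuple_comp_braidBHom (g : UDAHA F →ₐ[F] UDAHA F) :
    tuple (g.comp (braidBHom F)) = braidB (tuple g) := by
  rw [braidBHom, tuple_comp, tuple_lift, MonoidHom.comp_braidB]
  rfl

theorem tuple_comp_braidCHom (g : UDAHA F →ₐ[F] UDAHA F) :
    tuple (g.comp (braidCHom F)) = braidC (tuple g) := by
  rw [braidCHom, tuple_comp, tuple_lift, MonoidHom.comp_braidC]
  rfl

theorem braidBHom_pow_three : braidBHom F ^ 3 = conjT₁ F := by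
  apply hom_ext
  rw [tuple_pow tuple_comp_braidBHom, tuple_conjT₁]
  exact braidB_braidB_braidB _

theorem braidCHom_sq : braidCHom F ^ 2 = conjT₁ F := by
  apply hom_ext
  rw [tuple_pow tuple_comp_braidCHom, tuple_conjT₁]
  exact braidC_braidC (Set.subset_center_units isDAHATuple_gen.prod_mem_center)

theorem isUnit_conjT₁ : IsUnit (conjT₁ F : UDAHA F →ₐ[F] UDAHA F) :=
  ((AlgEquiv.algHomUnitsEquiv F (UDAHA F)).symm (conjT₁ F)).isUnit

theorem isUnit_braidBHom : IsUnit (braidBHom F) := by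
  rw [← isUnit_pow_iff three_ne_zero, braidBHom_pow_three]
  exact isUnit_conjT₁

theorem isUnit_braidCHom : IsUnit (braidCHom F) := by
  rw [← isUnit_pow_iff two_ne_zero, braidCHom_sq]
  exact isUnit_conjT₁

variable (F) in
noncomputable def braidAction : B3 →* (UDAHA F ≃ₐ[F] UDAHA F) :=
  (AlgEquiv.algHomUnitsEquiv F (UDAHA F)).toMonoidHom.comp <|
    PresentedGroup.toGroup
      (f := ![(isUnit_braidBHom (F := F)).unit, (isUnit_braidCHom (F := F)).unit]) <| by
      rintro _ rfl
      simp only [map_mul, map_pow, map_inv, FreeGroup.lift_apply_of, mul_inv_eq_one]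
      ext : 1
      simp [braidBHom_pow_three, braidCHom_sq]

theorem braidAction_of_zero (x : UDAHA F) :
    braidAction F (PresentedGroup.of 0) x = braidBHom F x := by
  simp [braidAction]

theorem braidAction_of_one (x : UDAHA F) :
    braidAction F (PresentedGroup.of 1) x = braidCHom F x := by
  simp [braidAction]

theorem braidAction_of_zero_pow_three :
    braidAction F (PresentedGroup.of 0 ^ 3) = conjT₁ F := by
  ext x
  simp only [map_pow, AlgEquiv.coe_pow, Function.iterate_succ, Function.iterate_zero,
    Function.comp_apply, id_eq, braidAction_of_zero]
  exact AlgHom.congr_fun braidBHom_pow_three x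

end Automorphisms

end UDAHA

theorem stmt_13 (F : Type) [Field F] :
    ∃ ρ : B3 →* (UDAHA F ≃ₐ[F] UDAHA F),
      (ρ (PresentedGroup.of 0)) (T F 0) = T F 7 * T F 2 * T F 3 ∧
      (ρ (PresentedGroup.of 0)) (T F 1) = T F 0 ∧
      (ρ (PresentedGroup.of 0)) (T F 2) = T F 1 ∧
      (ρ (PresentedGroup.of 0)) (T F 3) = T F 3 ∧
      (ρ (PresentedGroup.of 1)) (T F 0) = T F 7 * T F 2 * T F 3 ∧
      (ρ (PresentedGroup.of 1)) (T F 1) = T F 0 * T F 1 * T F 4 ∧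
      (ρ (PresentedGroup.of 1)) (T F 2) = T F 0 ∧
      (ρ (PresentedGroup.of 1)) (T F 3) = T F 3 ∧
      (∀ h : UDAHA F, (ρ (PresentedGroup.of 0 ^ 3)) h = T F 7 * h * T F 3) := by
  -- `gen F i`, `braidB (gen F) i` and `braidC (gen F) i` unfold to the words in `T F` above.
  have hb (i : Fin 4) : UDAHA.braidAction F (PresentedGroup.of 0) (UDAHA.gen F i) =
      braidB (UDAHA.gen F) i :=
    (UDAHA.braidAction_of_zero _).trans (UDAHA.lift_gen _ _ i)
  have hc (i : Fin 4) : UDAHA.braidAction F (PresentedGroup.of 1) (UDAHA.gen F i) =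
      braidC (UDAHA.gen F) i :=
    (UDAHA.braidAction_of_one _).trans (UDAHA.lift_gen _ _ i)
  refine ⟨UDAHA.braidAction F, hb 0, hb 1, hb 2, hb 3, hc 0, hc 1, hc 2, hc 3, fun h => ?_⟩
  rw [UDAHA.braidAction_of_zero_pow_three, UDAHA.conjT₁_apply]
end

section
/- Let H = H(k₀, k₁, k₀^∨, k₁^∨; q) be the double affine Hecke algebra of type (C₁^∨, C₁) over a field F, with x = t₀^∨ t₁ + (t₀^∨ t₁)^{-1}, y = t₁^∨ t₁ + (t₁^∨ t₁)^{-1}, z = t₀ t₁ + (t₀ t₁)^{-1}. If q² = 1, then x, y, z mutually commute. -/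
section Aux
variable {F A : Type} [Field F] [Ring A] [Algebra F A]

lemma lemA1 (u v : A) (α δ : F) (hv : v*v = δ•v - 1) :
    Commute (u*v + (δ•(1:A)-v)*(α•(1:A)-u)) v := by
  have hv' : ∀ x : A, v*(v*x) = δ•(v*x) - x := fun x => by
    rw [← mul_assoc, hv, sub_mul, smul_mul_assoc, one_mul]
  show _ = _
  simp only [add_mul, mul_add, sub_mul, mul_sub, smul_mul_assoc, mul_smul_comm,
    mul_assoc, mul_one, one_mul, hv, hv']
  match_scalars <;> ring

lemma lemA2 (u v : A) (α δ : F) (hu : u*u = α•u - 1) :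
    Commute (u*v + (δ•(1:A)-v)*(α•(1:A)-u)) u := by
  have hu' : ∀ x : A, u*(u*x) = α•(u*x) - x := fun x => by
    rw [← mul_assoc, hu, sub_mul, smul_mul_assoc, one_mul]
  show _ = _
  simp only [add_mul, mul_add, sub_mul, mul_sub, smul_mul_assoc, mul_smul_comm,
    mul_assoc, mul_one, one_mul, hu, hu']
  match_scalars <;> ring

lemma quad_inv_right {v : A} {δ : F} (hv : v*v = δ•v - 1) : v*(δ•(1:A)-v) = 1 := by
  rw [mul_sub, mul_smul_comm, mul_one, hv]; abel

lemma quad_inv_left {v : A} {δ : F} (hv : v*v = δ•v - 1) : (δ•(1:A)-v)*v = 1 := by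
  rw [sub_mul, smul_mul_assoc, one_mul, hv]; abel

theorem main_aux (a b c d : A) (q α β γ δ : F) (hq2 : q*q = 1)
    (ha : a*a = α•a - 1) (hb : b*b = β•b - 1) (hc : c*c = γ•c - 1) (hd : d*d = δ•d - 1)
    (habcd : a*(b*(c*d)) = q⁻¹•(1:A)) :
    Commute (a*d + (δ•(1:A)-d)*(α•(1:A)-a)) (c*d + (δ•(1:A)-d)*(γ•(1:A)-c)) ∧
    Commute (c*d + (δ•(1:A)-d)*(γ•(1:A)-c)) (b*d + (δ•(1:A)-d)*(β•(1:A)-b)) ∧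
    Commute (b*d + (δ•(1:A)-d)*(β•(1:A)-b)) (a*d + (δ•(1:A)-d)*(α•(1:A)-a)) := by
  have hqinv : q⁻¹ = q := inv_eq_of_mul_eq_one_right hq2
  rw [hqinv] at habcd
  set a' : A := α•(1:A)-a with ha'
  set b' : A := β•(1:A)-b with hb'
  set c' : A := γ•(1:A)-c with hc'
  set d' : A := δ•(1:A)-d with hd'
  set X : A := a*d + d'*a' with hX
  set Y : A := c*d + d'*c' with hY
  set Z : A := b*d + d'*b' with hZ
  have ha'a : a'*a = 1 := quad_inv_left ha
  have hb'b : b'*b = 1 := quad_inv_left hb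
  have hcc' : c*c' = 1 := quad_inv_right hc
  have hc'c : c'*c = 1 := quad_inv_left hc
  have hdd' : d*d' = 1 := quad_inv_right hd
  have hd'd : d'*d = 1 := quad_inv_left hd
  -- derived relations
  have hbcd : b*(c*d) = q•a' := by
    have h1 : a'*(a*(b*(c*d))) = a'*(q•(1:A)) := by rw [habcd]
    rw [← mul_assoc, ha'a, one_mul, mul_smul_comm, mul_one] at h1
    exact h1
  have hcd : c*d = q•(b'*a') := by
    have h1 : b'*(b*(c*d)) = b'*(q•a') := by rw [hbcd]
    rw [← mul_assoc, hb'b, one_mul, mul_smul_comm] at h1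
    exact h1
  have hbc : b*c = q•(a'*d') := by
    have h1 : (b*(c*d))*d' = (q•a')*d' := by rw [hbcd]
    rw [← mul_assoc b c d, mul_assoc (b*c) d d', hdd', mul_one, smul_mul_assoc] at h1
    exact h1
  -- inverses of cd and bc
  have habcd2 : (a*b)*(c*d) = q•(1:A) := by rw [mul_assoc, habcd]
  have hq_ab : (q•(a*b))*(c*d) = 1 := by
    rw [smul_mul_assoc, habcd2, smul_smul, hq2, one_smul]
  have hd'c' : d'*c' = q•(a*b) := by
    have hcdw : (c*d)*(d'*c') = 1 := by
      rw [mul_assoc c d _, ← mul_assoc d d' c', hdd', one_mul, hcc']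
    calc d'*c' = ((q•(a*b))*(c*d))*(d'*c') := by rw [hq_ab, one_mul]
    _ = (q•(a*b))*((c*d)*(d'*c')) := by rw [mul_assoc]
    _ = q•(a*b) := by rw [hcdw, mul_one]
  have hbc_da : (b*c)*(q•(d*a)) = 1 := by
    rw [hbc, smul_mul_assoc, mul_smul_comm, smul_smul, hq2,
      one_smul, mul_assoc, ← mul_assoc d' d a, hd'd, one_mul, ha'a]
  have hc'b' : c'*b' = q•(d*a) := by
    have h1 : (c'*b')*(b*c) = 1 := by
      rw [mul_assoc, ← mul_assoc b' b c, hb'b, one_mul, hc'c]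
    calc c'*b' = (c'*b')*((b*c)*(q•(d*a))) := by rw [hbc_da, mul_one]
    _ = ((c'*b')*(b*c))*(q•(d*a)) := by rw [← mul_assoc]
    _ = q•(d*a) := by rw [h1, one_mul]
  -- X commutes with a and d
  have hXa : Commute X a := lemA2 a d α δ ha
  have hXd : Commute X d := lemA1 a d α δ hd
  -- swap : X = d*a + a'*d'
  have hswap : X = d*a + a'*d' := by
    have h1 : a'*(X*a) = d*a + a'*d' := by
      rw [hX, add_mul, mul_assoc a d a, mul_assoc d' a' a, ha'a, mul_one, mul_add,
        ← mul_assoc a' a, ha'a, one_mul]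
    have h2 : a'*(X*a) = X := by
      rw [hXa.eq, ← mul_assoc, ha'a, one_mul]
    exact h2.symm.trans h1
  have hX2 : X = q•(b*c + c'*b') := by
    rw [smul_add, hbc, hc'b', smul_smul, smul_smul, hq2, one_smul, one_smul,
      hswap, add_comm]
  have hY2 : Y = q•(a*b + b'*a') := by
    rw [hY, hcd, hd'c', smul_add, add_comm]
  -- commutation with generators
  have hXb : Commute X b := by rw [hX2]; exact (lemA2 b c β γ hb).smul_left q
  have hXc : Commute X c := by rw [hX2]; exact (lemA1 b c β γ hc).smul_left q
  have hYb : Commute Y b := by rw [hY2]; exact (lemA1 a b α β hb).smul_left q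
  have hYd : Commute Y d := lemA1 c d γ δ hd
  have hXb' : Commute X b' := ((Commute.one_right X).smul_right β).sub_right hXb
  have hXc' : Commute X c' := ((Commute.one_right X).smul_right γ).sub_right hXc
  have hXd' : Commute X d' := ((Commute.one_right X).smul_right δ).sub_right hXd
  have hYb' : Commute Y b' := ((Commute.one_right Y).smul_right β).sub_right hYb
  have hYd' : Commute Y d' := ((Commute.one_right Y).smul_right δ).sub_right hYd
  refine ⟨?_, ?_, ?_⟩
  · exact (hXc.mul_right hXd).add_right (hXd'.mul_right hXc')
  · exact (hYb.mul_right hYd).add_right (hYd'.mul_right hYb')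
  · exact ((hXb.mul_right hXd).add_right (hXd'.mul_right hXb')).symm

lemma quad_conv {t : A} {k : F} (hk : k ≠ 0)
    (h : (t - algebraMap F A k)*(t - algebraMap F A k⁻¹) = 0) :
    t*t = (k + k⁻¹)•t - 1 := by
  have expand : (t - algebraMap F A k)*(t - algebraMap F A k⁻¹)
      = t*t - (k+k⁻¹)•t + (k*k⁻¹)•(1:A) := by
    simp only [Algebra.algebraMap_eq_smul_one, sub_mul, mul_sub, smul_mul_assoc,
      mul_smul_comm, smul_smul, mul_one, one_mul]
    match_scalars <;> ring
  rw [expand, mul_inv_cancel₀ hk, one_smul] at h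
  have h2 : t*t - ((k+k⁻¹)•t - 1) = t*t - (k+k⁻¹)•t + 1 := by abel
  rw [← sub_eq_zero, h2]
  exact h
end Aux

/-- Defining relations of the DAHA H(k₀,k₁,k₀∨,k₁∨;q) of type (C₁∨,C₁).
Generator indices: 0 = t₀∨, 1 = t₀, 2 = t₁∨, 3 = t₁. -/
inductive DRel (F : Type) [Field F] (k0 k1 k0v k1v q : F) :
    FreeAlgebra F (Fin 4) → FreeAlgebra F (Fin 4) → Prop
  | relt0 : DRel F k0 k1 k0v k1v q
      ((FreeAlgebra.ι F 1 - algebraMap F _ k0) * (FreeAlgebra.ι F 1 - algebraMap F _ k0⁻¹)) 0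
  | relt1 : DRel F k0 k1 k0v k1v q
      ((FreeAlgebra.ι F 3 - algebraMap F _ k1) * (FreeAlgebra.ι F 3 - algebraMap F _ k1⁻¹)) 0
  | relt0v : DRel F k0 k1 k0v k1v q
      ((FreeAlgebra.ι F 0 - algebraMap F _ k0v) * (FreeAlgebra.ι F 0 - algebraMap F _ k0v⁻¹)) 0
  | relt1v : DRel F k0 k1 k0v k1v q
      ((FreeAlgebra.ι F 2 - algebraMap F _ k1v) * (FreeAlgebra.ι F 2 - algebraMap F _ k1v⁻¹)) 0
  | relprod : DRel F k0 k1 k0v k1v q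
      (FreeAlgebra.ι F 0 * FreeAlgebra.ι F 1 * FreeAlgebra.ι F 2 * FreeAlgebra.ι F 3)
      (algebraMap F _ q⁻¹)

/-- The double affine Hecke algebra of type (C₁∨,C₁). -/
abbrev DAHA (F : Type) [Field F] (k0 k1 k0v k1v q : F) := RingQuot (DRel F k0 k1 k0v k1v q)

/-- The images of the generators in the DAHA. -/
noncomputable def S (F : Type) [Field F] (k0 k1 k0v k1v q : F) (i : Fin 4) :
    DAHA F k0 k1 k0v k1v q :=
  RingQuot.mkAlgHom F (DRel F k0 k1 k0v k1v q) (FreeAlgebra.ι F i)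

theorem stmt_17 (F : Type) [Field F] (k0 k1 k0v k1v q : F)
    (hk0 : k0 ≠ 0) (hk1 : k1 ≠ 0) (hk0v : k0v ≠ 0) (hk1v : k1v ≠ 0) (hq : q ≠ 0)
    (hq2 : q ^ 2 = 1) :
    let H := DAHA F k0 k1 k0v k1v q
    let t0v := S F k0 k1 k0v k1v q 0; let t0 := S F k0 k1 k0v k1v q 1
    let t1v := S F k0 k1 k0v k1v q 2; let t1 := S F k0 k1 k0v k1v q 3
    let t0vi := algebraMap F H (k0v + k0v⁻¹) - t0v
    let t0i := algebraMap F H (k0 + k0⁻¹) - t0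
    let t1vi := algebraMap F H (k1v + k1v⁻¹) - t1v
    let t1i := algebraMap F H (k1 + k1⁻¹) - t1
    let x := t0v * t1 + t1i * t0vi
    let y := t1v * t1 + t1i * t1vi
    let z := t0 * t1 + t1i * t0i
    Commute x y ∧ Commute y z ∧ Commute z x := by
  intro H t0v t0 t1v t1 t0vi t0i t1vi t1i x y z
  have hS : ∀ i, S F k0 k1 k0v k1v q i
      = RingQuot.mkAlgHom F (DRel F k0 k1 k0v k1v q) (FreeAlgebra.ι F i) := fun _ => rfl
  have r0 := RingQuot.mkAlgHom_rel F (DRel.relt0v : DRel F k0 k1 k0v k1v q _ _)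
  have r1 := RingQuot.mkAlgHom_rel F (DRel.relt0 : DRel F k0 k1 k0v k1v q _ _)
  have r2 := RingQuot.mkAlgHom_rel F (DRel.relt1v : DRel F k0 k1 k0v k1v q _ _)
  have r3 := RingQuot.mkAlgHom_rel F (DRel.relt1 : DRel F k0 k1 k0v k1v q _ _)
  have rp := RingQuot.mkAlgHom_rel F (DRel.relprod : DRel F k0 k1 k0v k1v q _ _)
  simp only [map_mul, map_sub, map_zero, AlgHom.commutes, ← hS] at r0 r1 r2 r3 rp
  have ha := quad_conv hk0v r0
  have hb := quad_conv hk0 r1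
  have hc := quad_conv hk1v r2
  have hd := quad_conv hk1 r3
  have habcd : t0v*(t0*(t1v*t1)) = q⁻¹•(1:H) := by
    show (S F k0 k1 k0v k1v q 0)*((S F k0 k1 k0v k1v q 1)*((S F k0 k1 k0v k1v q 2)*(S F k0 k1 k0v k1v q 3))) = _
    rw [← mul_assoc, ← mul_assoc, rp, Algebra.algebraMap_eq_smul_one]
  have hq2' : q*q = 1 := by rwa [pow_two] at hq2
  have main := main_aux t0v t0 t1v t1 q (k0v + k0v⁻¹) (k0 + k0⁻¹) (k1v + k1v⁻¹) (k1 + k1⁻¹)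
    hq2' ha hb hc hd habcd
  show Commute (t0v * t1 + (algebraMap F H (k1 + k1⁻¹) - t1) * (algebraMap F H (k0v + k0v⁻¹) - t0v))
      (t1v * t1 + (algebraMap F H (k1 + k1⁻¹) - t1) * (algebraMap F H (k1v + k1v⁻¹) - t1v)) ∧
    Commute (t1v * t1 + (algebraMap F H (k1 + k1⁻¹) - t1) * (algebraMap F H (k1v + k1v⁻¹) - t1v))
      (t0 * t1 + (algebraMap F H (k1 + k1⁻¹) - t1) * (algebraMap F H (k0 + k0⁻¹) - t0)) ∧
    Commute (t0 * t1 + (algebraMap F H (k1 + k1⁻¹) - t1) * (algebraMap F H (k0 + k0⁻¹) - t0))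
      (t0v * t1 + (algebraMap F H (k1 + k1⁻¹) - t1) * (algebraMap F H (k0v + k0v⁻¹) - t0v))
  simp only [Algebra.algebraMap_eq_smul_one]
  exact main
end

section
/- Let H = H(k₀, k₁, k₀^∨, k₁^∨; q) be the double affine Hecke algebra of type (C₁^∨, C₁) over a field F with q² ≠ 1 and q⁴ = 1 (so that the characteristic of F is not 2), and set x = t₀^∨ t₁ + (t₀^∨ t₁)^{-1}, y = t₁^∨ t₁ + (t₁^∨ t₁)^{-1}. Then (xy + yx)/2 = (k₀^∨ + (k₀^∨)^{-1})(k₁^∨ + (k₁^∨)^{-1}) + (k₀ + k₀^{-1})(q^{-1} t₁ + q t₁^{-1}). -/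
set_option maxHeartbeats 4000000 in

set_option maxHeartbeats 4000000 in

set_option maxHeartbeats 4000000 in

set_option maxHeartbeats 4000000 in

set_option maxHeartbeats 4000000 in
theorem stmt_19 (F : Type) [Field F] (k0 k1 k0v k1v q : F)
    (hk0 : k0 ≠ 0) (hk1 : k1 ≠ 0) (hk0v : k0v ≠ 0) (hk1v : k1v ≠ 0) (hq : q ≠ 0)
    (hq2 : q ^ 2 ≠ 1) (hq4 : q ^ 4 = 1) :
    let H := DAHA F k0 k1 k0v k1v q
    let t0v := S F k0 k1 k0v k1v q 0; let t0 := S F k0 k1 k0v k1v q 1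
    let t1v := S F k0 k1 k0v k1v q 2; let t1 := S F k0 k1 k0v k1v q 3
    let t0vi := algebraMap F H (k0v + k0v⁻¹) - t0v
    let t0i := algebraMap F H (k0 + k0⁻¹) - t0
    let t1vi := algebraMap F H (k1v + k1v⁻¹) - t1v
    let t1i := algebraMap F H (k1 + k1⁻¹) - t1
    let x := t0v * t1 + t1i * t0vi
    let y := t1v * t1 + t1i * t1vi
    let z := t0 * t1 + t1i * t0i
    (2 : F)⁻¹ • (x * y + y * x) =
      algebraMap F H ((k0v + k0v⁻¹) * (k1v + k1v⁻¹))
        + (k0 + k0⁻¹) • (q⁻¹ • t1 + q • t1i) := by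
  intro H t0v t0 t1v t1 t0vi t0i t1vi t1i x y zq
  -- scalar facts
  have hqq : q * q = -1 := by
    have h0 : (q ^ 2 - 1) * (q ^ 2 + 1) = 0 := by linear_combination hq4
    rcases mul_eq_zero.mp h0 with h | h
    · exact absurd (by linear_combination h) hq2
    · linear_combination h
  have hqinv : q⁻¹ = -q := inv_eq_of_mul_eq_one_right (by rw [mul_neg, hqq, neg_neg])
  have hqq2 : q⁻¹ * q⁻¹ = -1 := by rw [hqinv, neg_mul_neg, hqq]
  -- prime unfoldings
  have hA' : t0vi = (k0v + k0v⁻¹) • (1 : H) - t0v := by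
    show algebraMap F H (k0v + k0v⁻¹) - t0v = _; rw [Algebra.algebraMap_eq_smul_one]
  have hB' : t0i = (k0 + k0⁻¹) • (1 : H) - t0 := by
    show algebraMap F H (k0 + k0⁻¹) - t0 = _; rw [Algebra.algebraMap_eq_smul_one]
  have hC' : t1vi = (k1v + k1v⁻¹) • (1 : H) - t1v := by
    show algebraMap F H (k1v + k1v⁻¹) - t1v = _; rw [Algebra.algebraMap_eq_smul_one]
  have hD' : t1i = (k1 + k1⁻¹) • (1 : H) - t1 := by
    show algebraMap F H (k1 + k1⁻¹) - t1 = _; rw [Algebra.algebraMap_eq_smul_one]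
  -- quadratic relations
  have rel0 : (t0v - algebraMap F H k0v) * (t0v - algebraMap F H k0v⁻¹) = 0 := by
    have h := RingQuot.mkAlgHom_rel F (@DRel.relt0v F _ k0 k1 k0v k1v q)
    simp only [map_mul, map_sub, map_zero, AlgHom.commutes] at h
    exact h
  have rel1 : (t0 - algebraMap F H k0) * (t0 - algebraMap F H k0⁻¹) = 0 := by
    have h := RingQuot.mkAlgHom_rel F (@DRel.relt0 F _ k0 k1 k0v k1v q)
    simp only [map_mul, map_sub, map_zero, AlgHom.commutes] at h
    exact h
  have rel2 : (t1v - algebraMap F H k1v) * (t1v - algebraMap F H k1v⁻¹) = 0 := by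
    have h := RingQuot.mkAlgHom_rel F (@DRel.relt1v F _ k0 k1 k0v k1v q)
    simp only [map_mul, map_sub, map_zero, AlgHom.commutes] at h
    exact h
  have rel3 : (t1 - algebraMap F H k1) * (t1 - algebraMap F H k1⁻¹) = 0 := by
    have h := RingQuot.mkAlgHom_rel F (@DRel.relt1 F _ k0 k1 k0v k1v q)
    simp only [map_mul, map_sub, map_zero, AlgHom.commutes] at h
    exact h
  have hprod : t0v * t0 * t1v * t1 = algebraMap F H q⁻¹ := by
    have h := RingQuot.mkAlgHom_rel F (@DRel.relprod F _ k0 k1 k0v k1v q)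
    simp only [map_mul, AlgHom.commutes] at h
    exact h
  have hQA : t0v * t0v - (k0v + k0v⁻¹) • t0v + 1 = 0 := by
    have e : t0v * t0v - (k0v + k0v⁻¹) • t0v + 1 =
        (t0v - algebraMap F H k0v) * (t0v - algebraMap F H k0v⁻¹)
          - (k0v * k0v⁻¹ - 1) • (1 : H) := by
      simp only [Algebra.algebraMap_eq_smul_one, mul_add, add_mul, mul_sub, sub_mul, smul_mul_assoc, mul_smul_comm, smul_smul, smul_add, smul_sub, mul_assoc, mul_one, one_mul]; module
    rw [rel0, mul_inv_cancel₀ hk0v] at e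
    simpa using e
  have hQB : t0 * t0 - (k0 + k0⁻¹) • t0 + 1 = 0 := by
    have e : t0 * t0 - (k0 + k0⁻¹) • t0 + 1 =
        (t0 - algebraMap F H k0) * (t0 - algebraMap F H k0⁻¹)
          - (k0 * k0⁻¹ - 1) • (1 : H) := by
      simp only [Algebra.algebraMap_eq_smul_one, mul_add, add_mul, mul_sub, sub_mul, smul_mul_assoc, mul_smul_comm, smul_smul, smul_add, smul_sub, mul_assoc, mul_one, one_mul]; module
    rw [rel1, mul_inv_cancel₀ hk0] at e
    simpa using e
  have hQC : t1v * t1v - (k1v + k1v⁻¹) • t1v + 1 = 0 := by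
    have e : t1v * t1v - (k1v + k1v⁻¹) • t1v + 1 =
        (t1v - algebraMap F H k1v) * (t1v - algebraMap F H k1v⁻¹)
          - (k1v * k1v⁻¹ - 1) • (1 : H) := by
      simp only [Algebra.algebraMap_eq_smul_one, mul_add, add_mul, mul_sub, sub_mul, smul_mul_assoc, mul_smul_comm, smul_smul, smul_add, smul_sub, mul_assoc, mul_one, one_mul]; module
    rw [rel2, mul_inv_cancel₀ hk1v] at e
    simpa using e
  have hQD : t1 * t1 - (k1 + k1⁻¹) • t1 + 1 = 0 := by
    have e : t1 * t1 - (k1 + k1⁻¹) • t1 + 1 =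
        (t1 - algebraMap F H k1) * (t1 - algebraMap F H k1⁻¹)
          - (k1 * k1⁻¹ - 1) • (1 : H) := by
      simp only [Algebra.algebraMap_eq_smul_one, mul_add, add_mul, mul_sub, sub_mul, smul_mul_assoc, mul_smul_comm, smul_smul, smul_add, smul_sub, mul_assoc, mul_one, one_mul]; module
    rw [rel3, mul_inv_cancel₀ hk1] at e
    simpa using e
  -- inverse lemmas
  have ha'a : t0vi * t0v = 1 := by
    have e : t0vi * t0v - 1 = (-1 : F) • (t0v * t0v - (k0v + k0v⁻¹) • t0v + 1) := by
      rw [hA']; simp only [mul_add, add_mul, mul_sub, sub_mul, smul_mul_assoc, mul_smul_comm, smul_smul, smul_add, smul_sub, mul_assoc, mul_one, one_mul]; module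
    rw [hQA, smul_zero] at e; exact sub_eq_zero.mp e
  have hb'b : t0i * t0 = 1 := by
    have e : t0i * t0 - 1 = (-1 : F) • (t0 * t0 - (k0 + k0⁻¹) • t0 + 1) := by
      rw [hB']; simp only [mul_add, add_mul, mul_sub, sub_mul, smul_mul_assoc, mul_smul_comm, smul_smul, smul_add, smul_sub, mul_assoc, mul_one, one_mul]; module
    rw [hQB, smul_zero] at e; exact sub_eq_zero.mp e
  have hc'c : t1vi * t1v = 1 := by
    have e : t1vi * t1v - 1 = (-1 : F) • (t1v * t1v - (k1v + k1v⁻¹) • t1v + 1) := by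
      rw [hC']; simp only [mul_add, add_mul, mul_sub, sub_mul, smul_mul_assoc, mul_smul_comm, smul_smul, smul_add, smul_sub, mul_assoc, mul_one, one_mul]; module
    rw [hQC, smul_zero] at e; exact sub_eq_zero.mp e
  have hcc' : t1v * t1vi = 1 := by
    have e : t1v * t1vi - 1 = (-1 : F) • (t1v * t1v - (k1v + k1v⁻¹) • t1v + 1) := by
      rw [hC']; simp only [mul_add, add_mul, mul_sub, sub_mul, smul_mul_assoc, mul_smul_comm, smul_smul, smul_add, smul_sub, mul_assoc, mul_one, one_mul]; module
    rw [hQC, smul_zero] at e; exact sub_eq_zero.mp e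
  have hd'd : t1i * t1 = 1 := by
    have e : t1i * t1 - 1 = (-1 : F) • (t1 * t1 - (k1 + k1⁻¹) • t1 + 1) := by
      rw [hD']; simp only [mul_add, add_mul, mul_sub, sub_mul, smul_mul_assoc, mul_smul_comm, smul_smul, smul_add, smul_sub, mul_assoc, mul_one, one_mul]; module
    rw [hQD, smul_zero] at e; exact sub_eq_zero.mp e
  -- collapse helpers
  have hAw : ∀ w : H, t0vi * (t0v * w) = w := fun w => by rw [← mul_assoc, ha'a, one_mul]
  have hBw : ∀ w : H, t0i * (t0 * w) = w := fun w => by rw [← mul_assoc, hb'b, one_mul]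
  have hCw : ∀ w : H, t1vi * (t1v * w) = w := fun w => by rw [← mul_assoc, hc'c, one_mul]
  have hCw' : ∀ w : H, t1v * (t1vi * w) = w := fun w => by rw [← mul_assoc, hcc', one_mul]
  -- elimination of t1, t1i
  have hprod' : t0v * (t0 * (t1v * t1)) = algebraMap F H q⁻¹ := by
    simp only [← mul_assoc]; exact hprod
  have hbcd : t0 * (t1v * t1) = q⁻¹ • t0vi := by
    have h : t0vi * (t0v * (t0 * (t1v * t1))) = t0vi * algebraMap F H q⁻¹ := by rw [hprod']
    rw [hAw, Algebra.algebraMap_eq_smul_one, mul_smul_comm, mul_one] at h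
    exact h
  have hcd : t1v * t1 = q⁻¹ • (t0i * t0vi) := by
    have h : t0i * (t0 * (t1v * t1)) = t0i * (q⁻¹ • t0vi) := by rw [hbcd]
    rw [hBw, mul_smul_comm] at h
    exact h
  have hd : t1 = q⁻¹ • (t1vi * (t0i * t0vi)) := by
    have h : t1vi * (t1v * t1) = t1vi * (q⁻¹ • (t0i * t0vi)) := by rw [hcd]
    rw [hCw, mul_smul_comm] at h
    exact h
  have hdabc : t1 * (t0v * (t0 * t1v)) = q⁻¹ • (1 : H) := by
    rw [hd, smul_mul_assoc]
    congr 1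
    simp only [mul_assoc, hAw, hBw]
    exact hc'c
  have hdq : t1 * (q • (t0v * (t0 * t1v))) = 1 := by
    rw [mul_smul_comm, hdabc, smul_smul, mul_inv_cancel₀ hq, one_smul]
  have hd' : t1i = q • (t0v * (t0 * t1v)) := by
    have h : t1i * (t1 * (q • (t0v * (t0 * t1v)))) = t1i := by rw [hdq, mul_one]
    rw [← mul_assoc, hd'd, one_mul] at h
    exact h.symm
  have hE0 : t1vi * (t0i * t0vi) - t0v * (t0 * t1v) - (q * (k1 + k1⁻¹)) • (1 : H) = 0 := by
    have hW : t1vi * (t0i * t0vi) = q • t1 := by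
      rw [hd, smul_smul, mul_inv_cancel₀ hq, one_smul]
    have hV : t0v * (t0 * t1v) = q⁻¹ • t1i := by
      rw [hd', smul_smul, inv_mul_cancel₀ hq, one_smul]
    rw [hW, hV, hD', hqinv]; module
  -- express x, y
  have hx : x = q⁻¹ • (t0v * (t1vi * (t0i * t0vi)) - (t0v * (t0 * t1v)) * t0vi) := by
    show t0v * t1 + t1i * t0vi = _
    rw [hd, hd', hqinv]
    simp only [mul_add, add_mul, mul_sub, sub_mul, smul_mul_assoc, mul_smul_comm, smul_smul, smul_add, smul_sub, mul_assoc, mul_one, one_mul]; module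
  have hy : y = q⁻¹ • (t0i * t0vi - t0v * t0) := by
    show t1v * t1 + t1i * t1vi = _
    rw [hd, hd', hqinv]
    simp only [mul_smul_comm, smul_mul_assoc, mul_assoc, hCw', hcc', mul_one]
    module
  have hxy : x * y + y * x = -((t0v * (t1vi * (t0i * t0vi)) - (t0v * (t0 * t1v)) * t0vi) * (t0i * t0vi - t0v * t0) + (t0i * t0vi - t0v * t0) * (t0v * (t1vi * (t0i * t0vi)) - (t0v * (t0 * t1v)) * t0vi)) := by
    rw [hx, hy]
    simp only [smul_mul_assoc, mul_smul_comm, smul_smul, hqq2]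
    module
  have hrhs : q⁻¹ • t1 + q • t1i = -((t1vi * (t0i * t0vi)) + (t0v * (t0 * t1v))) := by
    rw [hd, hd', smul_smul, smul_smul, hqq2, hqq]; module
  -- the certificate identity
  have cert : ((t0v * (t1vi * (t0i * t0vi)) - (t0v * (t0 * t1v)) * t0vi) * (t0i * t0vi - t0v * t0) + (t0i * t0vi - t0v * t0) * (t0v * (t1vi * (t0i * t0vi)) - (t0v * (t0 * t1v)) * t0vi))
      - (((2 : F) * (k0 + k0⁻¹)) • ((t1vi * (t0i * t0vi)) + (t0v * (t0 * t1v)))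
        - ((2 : F) * ((k0v + k0v⁻¹) * (k1v + k1v⁻¹))) • (1 : H)) =
      ((-(k0 + k0⁻¹)) : F) • ((t1vi * (t0i * t0vi) - t0v * (t0 * t1v) - (q * (k1 + k1⁻¹)) • (1 : H)))
      + (((k0v + k0v⁻¹)) : F) • ((t1vi * (t0i * t0vi) - t0v * (t0 * t1v) - (q * (k1 + k1⁻¹)) • (1 : H)) * (t0v * (t0)))
      + (((-1)) : F) • ((t1vi * (t0i * t0vi) - t0v * (t0 * t1v) - (q * (k1 + k1⁻¹)) • (1 : H)) * (t0v * (t0 * (t0v))))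
      + ((-(k0 + k0⁻¹) * (q * (k1 + k1⁻¹)) - (k0v + k0v⁻¹) * (k0 + k0⁻¹) * (k0 + k0⁻¹) * (k1v + k1v⁻¹)) : F) • ((t0v * t0v - (k0v + k0v⁻¹) • t0v + 1))
      + ((2 * (k0 + k0⁻¹) * (k0 + k0⁻¹) * (k1v + k1v⁻¹)) : F) • ((t0v * t0v - (k0v + k0v⁻¹) • t0v + 1) * (t0v))
      + (((k0 + k0⁻¹) * (k1v + k1v⁻¹)) : F) • ((t0v * t0v - (k0v + k0v⁻¹) • t0v + 1) * (t0v * (t0)))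
      + ((2 * (k0v + k0v⁻¹) * (k0 + k0⁻¹) * (k1v + k1v⁻¹)) : F) • ((t0v * t0v - (k0v + k0v⁻¹) • t0v + 1) * (t0))
      + (((-2) * (k0 + k0⁻¹) * (k1v + k1v⁻¹)) : F) • ((t0v * t0v - (k0v + k0v⁻¹) • t0v + 1) * (t0 * (t0v)))
      + ((2 * (k0v + k0v⁻¹) * (k0 + k0⁻¹)) : F) • ((t0v * t0v - (k0v + k0v⁻¹) • t0v + 1) * (t0 * (t1v)))
      + (((-2) * (k0 + k0⁻¹)) : F) • ((t0v * t0v - (k0v + k0v⁻¹) • t0v + 1) * (t0 * (t1v * (t0v))))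
      + ((-(k0v + k0v⁻¹)) : F) • ((t0v * t0v - (k0v + k0v⁻¹) • t0v + 1) * (t0 * (t1v * (t0))))
      + ((1) : F) • ((t0v * t0v - (k0v + k0v⁻¹) • t0v + 1) * (t0 * (t1v * (t0 * (t0v)))))
      + (((k0v + k0v⁻¹) * (k0 + k0⁻¹) * (k0 + k0⁻¹)) : F) • ((t0v * t0v - (k0v + k0v⁻¹) • t0v + 1) * (t1v))
      + ((-(k0 + k0⁻¹) * (k0 + k0⁻¹)) : F) • ((t0v * t0v - (k0v + k0v⁻¹) • t0v + 1) * (t1v * (t0v)))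
      + ((-(k0v + k0v⁻¹) * (k0 + k0⁻¹)) : F) • ((t0v * t0v - (k0v + k0v⁻¹) • t0v + 1) * (t1v * (t0)))
      + (((k0 + k0⁻¹)) : F) • ((t0v * t0v - (k0v + k0v⁻¹) • t0v + 1) * (t1v * (t0 * (t0v))))
      + ((2 * (k0v + k0v⁻¹) * (k1v + k1v⁻¹)) : F) • ((t0 * t0 - (k0 + k0⁻¹) • t0 + 1))
      + (((-2) * (k1v + k1v⁻¹)) : F) • ((t0 * t0 - (k0 + k0⁻¹) • t0 + 1) * (t0v))
      + (((k0v + k0v⁻¹)) : F) • ((t0 * t0 - (k0 + k0⁻¹) • t0 + 1) * (t1v))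
      + (((-1)) : F) • ((t0 * t0 - (k0 + k0⁻¹) • t0 + 1) * (t1v * (t0v)))
      + (((k0v + k0v⁻¹) * (k0 + k0⁻¹)) : F) • ((t0v) * (t1vi * (t0i * t0vi) - t0v * (t0 * t1v) - (q * (k1 + k1⁻¹)) • (1 : H)))
      + ((-(k0 + k0⁻¹)) : F) • ((t0v) * ((t1vi * (t0i * t0vi) - t0v * (t0 * t1v) - (q * (k1 + k1⁻¹)) • (1 : H)) * (t0v)))
      + ((-(k0v + k0v⁻¹)) : F) • ((t0v) * ((t1vi * (t0i * t0vi) - t0v * (t0 * t1v) - (q * (k1 + k1⁻¹)) • (1 : H)) * (t0)))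
      + ((1) : F) • ((t0v) * ((t1vi * (t0i * t0vi) - t0v * (t0 * t1v) - (q * (k1 + k1⁻¹)) • (1 : H)) * (t0 * (t0v))))
      + ((-(k0 + k0⁻¹) * (k0 + k0⁻¹) * (k1v + k1v⁻¹)) : F) • ((t0v) * (t0v * t0v - (k0v + k0v⁻¹) • t0v + 1))
      + ((2 * (k1v + k1v⁻¹)) : F) • ((t0v) * (t0 * t0 - (k0 + k0⁻¹) • t0 + 1))
      + ((1) : F) • ((t0v) * ((t0 * t0 - (k0 + k0⁻¹) • t0 + 1) * (t1v)))
      + ((1) : F) • ((t0v * (t0)) * ((t1vi * (t0i * t0vi) - t0v * (t0 * t1v) - (q * (k1 + k1⁻¹)) • (1 : H)) * (t0v)))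
      + (((k0 + k0⁻¹) * (k1v + k1v⁻¹)) : F) • ((t0v * (t0)) * (t0v * t0v - (k0v + k0v⁻¹) • t0v + 1))
      + ((-(k1v + k1v⁻¹)) : F) • ((t0v * (t0)) * ((t0v * t0v - (k0v + k0v⁻¹) • t0v + 1) * (t0)))
      + (((-1)) : F) • ((t0v * (t0)) * ((t0v * t0v - (k0v + k0v⁻¹) • t0v + 1) * (t0 * (t1v))))
      + (((-1)) : F) • ((t0v * (t0 * (t0v))) * (t1vi * (t0i * t0vi) - t0v * (t0 * t1v) - (q * (k1 + k1⁻¹)) • (1 : H)))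
      + ((-(k1v + k1v⁻¹)) : F) • ((t0v * (t0 * (t0))) * (t0v * t0v - (k0v + k0v⁻¹) • t0v + 1))
      + (((-2) * (k0 + k0⁻¹)) : F) • ((t0v * (t0 * (t1v))) * (t0v * t0v - (k0v + k0v⁻¹) • t0v + 1))
      + (((-1)) : F) • ((t0v * (t0 * (t1v))) * ((t0v * t0v - (k0v + k0v⁻¹) • t0v + 1) * (t0)))
      + ((1) : F) • ((t0v * (t0 * (t1v * (t0)))) * (t0v * t0v - (k0v + k0v⁻¹) • t0v + 1))
      + ((-(k0 + k0⁻¹)) : F) • ((t0v * (t1v)) * ((t0v * t0v - (k0v + k0v⁻¹) • t0v + 1) * (t0)))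
      + (((-1)) : F) • ((t0v * (t1v)) * (t0 * t0 - (k0 + k0⁻¹) • t0 + 1))
      + ((1) : F) • ((t0v * (t1v * (t0))) * ((t0v * t0v - (k0v + k0v⁻¹) • t0v + 1) * (t0)))
      + (((k0v + k0v⁻¹) * (k0 + k0⁻¹) * (k1v + k1v⁻¹)) : F) • ((t0) * (t0v * t0v - (k0v + k0v⁻¹) • t0v + 1))
      + ((-(k0 + k0⁻¹) * (k1v + k1v⁻¹)) : F) • ((t0) * ((t0v * t0v - (k0v + k0v⁻¹) • t0v + 1) * (t0v)))
      + (((-2) * (k0v + k0v⁻¹) * (k1v + k1v⁻¹)) : F) • ((t0) * ((t0v * t0v - (k0v + k0v⁻¹) • t0v + 1) * (t0)))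
      + ((2 * (k1v + k1v⁻¹)) : F) • ((t0) * ((t0v * t0v - (k0v + k0v⁻¹) • t0v + 1) * (t0 * (t0v))))
      + ((-(k0v + k0v⁻¹)) : F) • ((t0) * ((t0v * t0v - (k0v + k0v⁻¹) • t0v + 1) * (t0 * (t1v))))
      + ((1) : F) • ((t0) * ((t0v * t0v - (k0v + k0v⁻¹) • t0v + 1) * (t0 * (t1v * (t0v)))))
      + ((-(k0v + k0v⁻¹) * (k0 + k0⁻¹)) : F) • ((t0) * ((t0v * t0v - (k0v + k0v⁻¹) • t0v + 1) * (t1v)))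
      + (((k0 + k0⁻¹)) : F) • ((t0) * ((t0v * t0v - (k0v + k0v⁻¹) • t0v + 1) * (t1v * (t0v))))
      + (((k0v + k0v⁻¹)) : F) • ((t0) * ((t0v * t0v - (k0v + k0v⁻¹) • t0v + 1) * (t1v * (t0))))
      + (((-1)) : F) • ((t0) * ((t0v * t0v - (k0v + k0v⁻¹) • t0v + 1) * (t1v * (t0 * (t0v)))))
      + ((-(k0v + k0v⁻¹) * (k0 + k0⁻¹)) : F) • ((t1v) * ((t0v * t0v - (k0v + k0v⁻¹) • t0v + 1) * (t0)))
      + (((k0 + k0⁻¹)) : F) • ((t1v) * ((t0v * t0v - (k0v + k0v⁻¹) • t0v + 1) * (t0 * (t0v))))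
      + ((-(k0v + k0v⁻¹)) : F) • ((t1v) * (t0 * t0 - (k0 + k0⁻¹) • t0 + 1))
      + ((1) : F) • ((t1v) * ((t0 * t0 - (k0 + k0⁻¹) • t0 + 1) * (t0v)))
      + (((k0v + k0v⁻¹)) : F) • ((t1v * (t0)) * ((t0v * t0v - (k0v + k0v⁻¹) • t0v + 1) * (t0)))
      + (((-1)) : F) • ((t1v * (t0)) * ((t0v * t0v - (k0v + k0v⁻¹) • t0v + 1) * (t0 * (t0v)))) := by
    simp only [hA', hB', hC', mul_add, add_mul, mul_sub, sub_mul, smul_mul_assoc, mul_smul_comm, smul_smul, smul_add, smul_sub, mul_assoc, mul_one, one_mul]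
    module
  simp only [hQA, hQB, hE0, mul_zero, zero_mul, smul_zero, add_zero, zero_add] at cert
  have hXY := sub_eq_zero.mp cert
  have h2 : (2 : F) ≠ 0 := by
    intro h
    exact hq2 (by rw [pow_two, hqq]; linear_combination -h)
  rw [hxy, hXY, hrhs, Algebra.algebraMap_eq_smul_one]
  match_scalars <;> field_simp <;> ring
end
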